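/- arXiv:math/0608236 — 2 statements merged into one kernel-verified Lean document; each statement's English description precedes it below -/
import Mathlib

section
/- For every n ∈ ℕ, there is a bijection between the family D₂(n) of decomposable non-crossing partitions of {1,...,n} of depth at most 2 and the set of pairs (τ, σ) where τ is an interval partition of {1,...,n} and σ is an odd interval subpartition of τ (i.e., σ refines τ and every block of τ is split into an odd number of subblocks of σ). -/
open Finset

/-- Block `p` is inner with respect to block `q` of the partition `P`:
every element of `p` lies strictly between two elements of `q`. -/
def InnerTo {n : ℕ} (P : Finpartition (Finset.univ : Finset (Fin n)))
    (p q : Finset (Fin n)) : Prop :=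
  p ∈ P.parts ∧ q ∈ P.parts ∧ p ≠ q ∧
    ∃ i ∈ q, ∃ j ∈ q, ∀ k ∈ p, i < k ∧ k < j

open scoped Classical in
/-- The depth of a block: one plus the number of blocks outer to it. -/
noncomputable def blockDepth {n : ℕ} (P : Finpartition (Finset.univ : Finset (Fin n)))
    (p : Finset (Fin n)) : ℕ :=
  (P.parts.filter fun q => InnerTo P p q).card + 1

/-- The partition is non-crossing: there are no `i < k < j < l` with
`i, j` in one block and `k, l` in a different block. -/
def IsNoncrossing {n : ℕ} (P : Finpartition (Finset.univ : Finset (Fin n))) : Prop :=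
  ¬ ∃ p ∈ P.parts, ∃ q ∈ P.parts, p ≠ q ∧
    ∃ i j k l : Fin n, i ∈ p ∧ j ∈ p ∧ k ∈ q ∧ l ∈ q ∧ i < k ∧ k < j ∧ j < l

/-- `P` belongs to `D₂(n)`: it is a non-crossing partition of depth at most `2`,
with at least one outer (depth-1) block, which is decomposable: no two depth-2
blocks are neighbors (adjacent intervals). -/
def IsD2 {n : ℕ} (P : Finpartition (Finset.univ : Finset (Fin n))) : Prop :=
  IsNoncrossing P ∧
  (∀ p ∈ P.parts, blockDepth P p ≤ 2) ∧
  (∃ p ∈ P.parts, blockDepth P p = 1) ∧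
  ¬ ∃ p ∈ P.parts, ∃ q ∈ P.parts, blockDepth P p = 2 ∧ blockDepth P q = 2 ∧
      ∃ x ∈ p, ∃ y ∈ q, (∀ a ∈ p, a ≤ x) ∧ (∀ b ∈ q, y ≤ b) ∧ (x : ℕ) + 1 = (y : ℕ)

/-- Every block of the partition is an interval of consecutive integers. -/
def IsIntervalPart {n : ℕ} (P : Finpartition (Finset.univ : Finset (Fin n))) : Prop :=
  ∀ B ∈ P.parts, ∃ a b : Fin n, B = Finset.Icc a b

/-- `σ` refines `τ`: every block of `σ` is contained in a block of `τ`. -/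
def Refines {n : ℕ} (σ τ : Finpartition (Finset.univ : Finset (Fin n))) : Prop :=
  ∀ B ∈ σ.parts, ∃ C ∈ τ.parts, B ⊆ C

/-- `(τ, σ)` is a pair of interval partitions with `σ` an *odd* interval
subpartition of `τ`: `σ` refines `τ` and every block of `τ` is split into an odd
number of blocks of `σ`. -/
def IsOddPair {n : ℕ} (τ σ : Finpartition (Finset.univ : Finset (Fin n))) : Prop :=
  IsIntervalPart τ ∧ IsIntervalPart σ ∧ Refines σ τ ∧
    ∀ C ∈ τ.parts, Odd (σ.parts.filter fun B => B ⊆ C).card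

open scoped Classical

variable {n : ℕ}

lemma parts_eq_image (P : Finpartition (univ : Finset (Fin n))) :
    P.parts = univ.image P.part := by
  ext B
  simp only [mem_image, mem_univ, true_and]
  constructor
  · intro hB
    obtain ⟨x, hx⟩ := P.nonempty_of_mem_parts hB
    exact ⟨x, P.part_eq_of_mem hB hx⟩
  · rintro ⟨x, rfl⟩; exact P.part_mem.2 (mem_univ x)

lemma part_ofSetoid (s : Setoid (Fin n)) [DecidableRel s.r] (a : Fin n) :
    (Finpartition.ofSetoid s).part a = univ.filter (s.r a) := by
  ext b
  rw [Finset.mem_filter]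
  exact ⟨fun h => ⟨mem_univ b, Finpartition.mem_part_ofSetoid_iff_rel.1 h⟩,
    fun h => Finpartition.mem_part_ofSetoid_iff_rel.2 h.2⟩

lemma ofSetoid_eq (P : Finpartition (univ : Finset (Fin n))) (s : Setoid (Fin n))
    [DecidableRel s.r] (h : ∀ i j, s.r i j ↔ P.part i = P.part j) :
    Finpartition.ofSetoid s = P := by
  apply Finpartition.ext
  rw [parts_eq_image, parts_eq_image]
  apply Finset.image_congr
  intro a _
  rw [part_ofSetoid]
  ext b
  simp only [mem_filter, mem_univ, true_and, h]
  constructor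
  · intro hb; rw [hb]; exact P.mem_part (mem_univ b)
  · intro hb; exact (P.part_eq_of_mem (P.part_mem.2 (mem_univ a)) hb).symm

lemma convex_eq_Icc (s : Finset (Fin n)) (hs : s.Nonempty)
    (h : ∀ a ∈ s, ∀ b ∈ s, ∀ c : Fin n, a ≤ c → c ≤ b → c ∈ s) :
    ∃ a b : Fin n, s = Icc a b := by
  refine ⟨s.min' hs, s.max' hs, ?_⟩
  ext c
  simp only [mem_Icc]
  exact ⟨fun hc => ⟨s.min'_le c hc, s.le_max' c hc⟩,
    fun ⟨h1, h2⟩ => h (s.min' hs) (s.min'_mem hs) (s.max' hs) (s.max'_mem hs) c h1 h2⟩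

lemma mem_part_iff_eq (P : Finpartition (univ : Finset (Fin n))) {x y : Fin n} :
    y ∈ P.part x ↔ P.part y = P.part x :=
  ⟨fun h => P.part_eq_of_mem (P.part_mem.2 (mem_univ x)) h,
   fun h => h ▸ P.mem_part (mem_univ y)⟩

section Rank

variable (τ σ : Finpartition (univ : Finset (Fin n)))

/-- number of `σ`-blocks inside `τ.part x` lying entirely below `x`. -/
noncomputable def rnk (x : Fin n) : ℕ :=
  (σ.parts.filter fun B => B ⊆ τ.part x ∧ ∀ b ∈ B, b < x).card

variable {τ σ}

lemma part_convex (hσ : IsIntervalPart σ) {x y z w : Fin n}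
    (hy : y ∈ σ.part x) (hz : z ∈ σ.part x) (h1 : y ≤ w) (h2 : w ≤ z) :
    w ∈ σ.part x := by
  obtain ⟨a, b, hab⟩ := hσ _ (σ.part_mem.2 (mem_univ x))
  rw [hab] at hy hz ⊢
  rw [mem_Icc] at *
  exact ⟨hy.1.trans h1, h2.trans hz.2⟩

lemma part_subset_tau (href : Refines σ τ) (x : Fin n) : σ.part x ⊆ τ.part x := by
  obtain ⟨C, hC, hsub⟩ := href _ (σ.part_mem.2 (mem_univ x))
  have hx : x ∈ C := hsub (σ.mem_part (mem_univ x))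
  rwa [τ.part_eq_of_mem hC hx]

lemma tau_part_eq (href : Refines σ τ) {x y : Fin n} (h : σ.part x = σ.part y) :
    τ.part x = τ.part y := by
  have hy : y ∈ τ.part x := part_subset_tau href x (h ▸ σ.mem_part (mem_univ y))
  exact ((mem_part_iff_eq τ).1 hy).symm

lemma rnk_eq_of_part_eq (hσ : IsIntervalPart σ) (href : Refines σ τ) {x y : Fin n}
    (h : σ.part x = σ.part y) : rnk τ σ x = rnk τ σ y := by
  have key : ∀ u v : Fin n, σ.part u = σ.part v → ∀ B ∈ σ.parts,
      (B ⊆ τ.part u ∧ ∀ b ∈ B, b < u) → (B ⊆ τ.part v ∧ ∀ b ∈ B, b < v) := by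
    intro u v huv B hB ⟨hsub, hlt⟩
    refine ⟨(tau_part_eq href huv) ▸ hsub, fun b hb => ?_⟩
    by_contra hbv
    push_neg at hbv
    have hbu : b ∈ σ.part u := by
      have hv : v ∈ σ.part u := huv ▸ σ.mem_part (mem_univ v)
      exact part_convex hσ hv (σ.mem_part (mem_univ u)) hbv (hlt b hb).le
    have : B = σ.part u := σ.eq_of_mem_parts hB (σ.part_mem.2 (mem_univ u)) hb hbu
    exact absurd (hlt u (this ▸ σ.mem_part (mem_univ u))) (lt_irrefl u)
  unfold rnk
  congr 1
  apply Finset.filter_congr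
  intro B hB
  exact ⟨fun hh => key x y h B hB hh, fun hh => key y x h.symm B hB hh⟩

lemma rnk_min (x : Fin n) (hmin : ∀ z ∈ τ.part x, x ≤ z) : rnk τ σ x = 0 := by
  unfold rnk
  rw [Finset.card_eq_zero, Finset.filter_eq_empty_iff]
  rintro B hB ⟨hsub, hlt⟩
  obtain ⟨b, hb⟩ := σ.nonempty_of_mem_parts hB
  exact absurd (hlt b hb) (not_lt.2 (hmin b (hsub hb)))

lemma rnk_succ (hσ : IsIntervalPart σ) (href : Refines σ τ) {x y : Fin n}
    (hxy : (x : ℕ) + 1 = (y : ℕ)) (ht : τ.part x = τ.part y)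
    (hs : σ.part x ≠ σ.part y) : rnk τ σ y = rnk τ σ x + 1 := by
  have hxltY : x < y := by rw [Fin.lt_def]; omega
  have hxmax : ∀ b ∈ σ.part x, b < y := by
    intro b hb
    by_contra hby
    push_neg at hby
    have : y ∈ σ.part x :=
      part_convex hσ (σ.mem_part (mem_univ x)) hb hxltY.le hby
    exact hs ((mem_part_iff_eq σ).1 this).symm
  have hset : (σ.parts.filter fun B => B ⊆ τ.part y ∧ ∀ b ∈ B, b < y)
      = insert (σ.part x) (σ.parts.filter fun B => B ⊆ τ.part x ∧ ∀ b ∈ B, b < x) := by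
    ext B
    simp only [mem_insert, mem_filter]
    constructor
    · rintro ⟨hB, hsub, hlt⟩
      by_cases hx : x ∈ B
      · exact Or.inl (σ.eq_of_mem_parts hB (σ.part_mem.2 (mem_univ x)) hx
          (σ.mem_part (mem_univ x)))
      · refine Or.inr ⟨hB, ht ▸ hsub, fun b hb => ?_⟩
        have := hlt b hb
        have hbx : (b : ℕ) ≤ x := by rw [Fin.lt_def] at this; omega
        rcases lt_or_eq_of_le hbx with h | h
        · exact Fin.lt_def.2 h
        · exact absurd (Fin.ext h : b = x) (fun he => hx (he ▸ hb))
    · rintro (rfl | ⟨hB, hsub, hlt⟩)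
      · refine ⟨σ.part_mem.2 (mem_univ x), ?_, hxmax⟩
        rw [← ht]; exact part_subset_tau href x
      · exact ⟨hB, ht ▸ hsub, fun b hb => (hlt b hb).trans hxltY⟩
  have hnot : σ.part x ∉ (σ.parts.filter fun B => B ⊆ τ.part x ∧ ∀ b ∈ B, b < x) := by
    simp only [mem_filter, not_and]
    intro _ _ hlt
    exact absurd (hlt x (σ.mem_part (mem_univ x))) (lt_irrefl x)
  unfold rnk
  rw [hset, Finset.card_insert_of_notMem hnot]

lemma count_eq_rnk_max (href : Refines σ τ) (x : Fin n) (hmax : ∀ z ∈ τ.part x, z ≤ x) :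
    (σ.parts.filter fun B => B ⊆ τ.part x).card = rnk τ σ x + 1 := by
  have hset : (σ.parts.filter fun B => B ⊆ τ.part x)
      = insert (σ.part x) (σ.parts.filter fun B => B ⊆ τ.part x ∧ ∀ b ∈ B, b < x) := by
    ext B
    simp only [mem_insert, mem_filter]
    constructor
    · rintro ⟨hB, hsub⟩
      by_cases hx : x ∈ B
      · exact Or.inl (σ.eq_of_mem_parts hB (σ.part_mem.2 (mem_univ x)) hx
          (σ.mem_part (mem_univ x)))
      · refine Or.inr ⟨hB, hsub, fun b hb => ?_⟩
        rcases lt_or_eq_of_le (hmax b (hsub hb)) with h | h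
        · exact h
        · exact absurd (h ▸ hb) hx
    · rintro (rfl | ⟨hB, hsub, _⟩)
      · exact ⟨σ.part_mem.2 (mem_univ x), part_subset_tau href x⟩

      · exact ⟨hB, hsub⟩
  have hnot : σ.part x ∉ (σ.parts.filter fun B => B ⊆ τ.part x ∧ ∀ b ∈ B, b < x) := by
    simp only [mem_filter, not_and]
    intro _ _ hlt
    exact absurd (hlt x (σ.mem_part (mem_univ x))) (lt_irrefl x)
  unfold rnk
  rw [hset, Finset.card_insert_of_notMem hnot]

end Rank
section Backward

variable (τ σ : Finpartition (univ : Finset (Fin n)))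

/-- the relation defining the partition associated to a pair `(τ, σ)`:
same `σ`-block, or same `τ`-block and both of even rank. -/
def bRel (i j : Fin n) : Prop :=
  σ.part i = σ.part j ∨
    (τ.part i = τ.part j ∧ Even (rnk τ σ i) ∧ Even (rnk τ σ j))

/-- even-rank elements of the `τ`-block of `x`. -/
noncomputable def evens (x : Fin n) : Finset (Fin n) :=
  (τ.part x).filter fun y => Even (rnk τ σ y)

variable {τ σ}

lemma evens_congr {x y : Fin n} (h : τ.part x = τ.part y) : evens τ σ x = evens τ σ y := by
  unfold evens; rw [h]

noncomputable def bSetoid (hσ : IsIntervalPart σ) (href : Refines σ τ) : Setoid (Fin n) where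
  r := bRel τ σ
  iseqv := by
    constructor
    · intro i; exact Or.inl rfl
    · rintro i j (h | ⟨h1, h2, h3⟩)
      · exact Or.inl h.symm
      · exact Or.inr ⟨h1.symm, h3, h2⟩
    · rintro i j k (h | ⟨h1, h2, h3⟩) (h' | ⟨h1', h2', h3'⟩)
      · exact Or.inl (h.trans h')
      · exact Or.inr ⟨(tau_part_eq href h).trans h1', (rnk_eq_of_part_eq hσ href h) ▸ h2', h3'⟩
      · exact Or.inr ⟨h1.trans (tau_part_eq href h'), h2,
          (rnk_eq_of_part_eq hσ href h') ▸ h3⟩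
      · exact Or.inr ⟨h1.trans h1', h2, h3'⟩

variable (hτ : IsIntervalPart τ) (hσ : IsIntervalPart σ) (href : Refines σ τ)

open scoped Classical in
noncomputable def GP : Finpartition (univ : Finset (Fin n)) :=
  Finpartition.ofSetoid (bSetoid hσ href)

lemma part_GP_odd {x : Fin n} (hx : ¬ Even (rnk τ σ x)) :
    (GP hσ href).part x = σ.part x := by
  unfold GP
  rw [part_ofSetoid]
  ext y
  simp only [mem_filter, mem_univ, true_and]
  show bRel τ σ x y ↔ _
  unfold bRel
  constructor
  · rintro (h | ⟨_, h2, _⟩)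
    · rw [h]; exact σ.mem_part (mem_univ y)
    · exact absurd h2 hx
  · intro hy
    exact Or.inl ((mem_part_iff_eq σ).1 hy).symm

lemma part_GP_even {x : Fin n} (hx : Even (rnk τ σ x)) :
    (GP hσ href).part x = evens τ σ x := by
  unfold GP
  rw [part_ofSetoid]
  ext y
  simp only [mem_filter, mem_univ, true_and]
  show bRel τ σ x y ↔ _
  unfold bRel evens
  simp only [mem_filter]
  constructor
  · rintro (h | ⟨h1, _, h3⟩)
    · have hmem : y ∈ σ.part x := h ▸ σ.mem_part (mem_univ y)
      refine ⟨part_subset_tau href x hmem, ?_⟩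
      rw [← rnk_eq_of_part_eq hσ href h]; exact hx
    · exact ⟨h1 ▸ τ.mem_part (mem_univ y), h3⟩
  · rintro ⟨h1, h2⟩
    exact Or.inr ⟨((mem_part_iff_eq τ).1 h1).symm, hx, h2⟩

lemma part_GP_subset (x : Fin n) : (GP hσ href).part x ⊆ τ.part x := by
  by_cases hx : Even (rnk τ σ x)
  · rw [part_GP_even hσ href hx]; exact Finset.filter_subset _ _
  · rw [part_GP_odd hσ href hx]; exact part_subset_tau href x

end Backward
lemma exists_part_rep {P : Finpartition (univ : Finset (Fin n))} {q : Finset (Fin n)}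
    (hq : q ∈ P.parts) : ∃ w, q = P.part w := by
  obtain ⟨x, hx⟩ := P.nonempty_of_mem_parts hq
  exact ⟨x, (P.part_eq_of_mem hq hx).symm⟩

section BackwardD2

variable {τ σ : Finpartition (univ : Finset (Fin n))}

lemma tau_Icc (hτ : IsIntervalPart τ) (x : Fin n) :
    ∃ a c : Fin n, τ.part x = Icc a c ∧ a ∈ τ.part x ∧
    c ∈ τ.part x ∧ a ≤ x ∧ x ≤ c := by
  obtain ⟨a, c, hIcc⟩ := hτ _ (τ.part_mem.2 (mem_univ x))
  have hx : x ∈ Icc a c := hIcc ▸ τ.mem_part (mem_univ x)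
  rw [mem_Icc] at hx
  refine ⟨a, c, hIcc, ?_, ?_, hx.1, hx.2⟩ <;> rw [hIcc, mem_Icc]
  · exact ⟨le_refl a, hx.1.trans hx.2⟩
  · exact ⟨hx.1.trans hx.2, le_refl c⟩

lemma rnk_left {x a c : Fin n} (hIcc : τ.part x = Icc a c) (ha : a ∈ τ.part x) :
    rnk τ σ a = 0 := by
  apply rnk_min
  intro z hz
  have : τ.part a = τ.part x := (mem_part_iff_eq τ).1 ha
  rw [this, hIcc, mem_Icc] at hz
  exact hz.1

lemma rnk_right (href : Refines σ τ)
    (hodd : ∀ C ∈ τ.parts, Odd (σ.parts.filter fun B => B ⊆ C).card)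
    {x a c : Fin n} (hIcc : τ.part x = Icc a c) (hc : c ∈ τ.part x) :
    Even (rnk τ σ c) := by
  have hpc : τ.part c = τ.part x := (mem_part_iff_eq τ).1 hc
  have hmax : ∀ z ∈ τ.part c, z ≤ c := by
    intro z hz; rw [hpc, hIcc, mem_Icc] at hz; exact hz.2
  have h1 := count_eq_rnk_max (σ := σ) href c hmax
  have h2 := hodd (τ.part c) (τ.part_mem.2 (mem_univ c))
  rw [h1] at h2
  exact Nat.not_odd_iff_even.mp (Nat.odd_add_one.mp h2)

lemma odd_strict (hσ : IsIntervalPart σ) (href : Refines σ τ)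
    (hodd : ∀ C ∈ τ.parts, Odd (σ.parts.filter fun B => B ⊆ C).card)
    {x a c : Fin n} (hIcc : τ.part x = Icc a c) (ha : a ∈ τ.part x)
    (hc : c ∈ τ.part x) (hx : ¬ Even (rnk τ σ x)) :
    ∀ k ∈ σ.part x, a < k ∧ k < c := by
  intro k hk
  have hk' : σ.part k = σ.part x := (mem_part_iff_eq σ).1 hk
  have hrk : rnk τ σ k = rnk τ σ x := rnk_eq_of_part_eq hσ href hk'
  have hkt : k ∈ τ.part x := part_subset_tau href x hk
  rw [hIcc, mem_Icc] at hkt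
  constructor
  · rcases lt_or_eq_of_le hkt.1 with h | h
    · exact h
    · exfalso; apply hx; rw [← hrk, ← h, rnk_left (σ := σ) hIcc ha]; exact Even.zero
  · rcases lt_or_eq_of_le hkt.2 with h | h
    · exact h
    · exfalso; apply hx
      rw [← hrk, h]
      exact rnk_right href hodd hIcc hc

lemma evens_eq_part (hτ : IsIntervalPart τ) (hσ : IsIntervalPart σ) (href : Refines σ τ)
    (x : Fin n) :
    ∃ w, Even (rnk τ σ w) ∧ τ.part w = τ.part x ∧
      evens τ σ x = (GP hσ href).part w := by
  obtain ⟨a, c, hIcc, ha, hc, _, _⟩ := tau_Icc hτ x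
  have hpa : τ.part a = τ.part x := (mem_part_iff_eq τ).1 ha
  have hra : Even (rnk τ σ a) := by rw [rnk_left (σ := σ) hIcc ha]; exact Even.zero
  exact ⟨a, hra, hpa, by rw [part_GP_even hσ href hra, evens_congr hpa]⟩

/-- each part of `GP` is either an interval `σ`-part (odd rank) or an `evens` set. -/
lemma part_GP_cases (hσ : IsIntervalPart σ) (href : Refines σ τ) (x : Fin n) :
    (¬ Even (rnk τ σ x) ∧ (GP hσ href).part x = σ.part x) ∨
    (Even (rnk τ σ x) ∧ (GP hσ href).part x = evens τ σ x) := by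
  by_cases hx : Even (rnk τ σ x)
  · exact Or.inr ⟨hx, part_GP_even hσ href hx⟩
  · exact Or.inl ⟨hx, part_GP_odd hσ href hx⟩

lemma GP_noncrossing (hτ : IsIntervalPart τ) (hσ : IsIntervalPart σ) (href : Refines σ τ) :
    IsNoncrossing (GP hσ href) := by
  rintro ⟨p, hp, q, hq, hne, i, j, k, l, hi, hj, hk, hl, hik, hkj, hjl⟩
  obtain ⟨w, rfl⟩ := exists_part_rep hq
  rcases part_GP_cases hσ href w with ⟨_, hqe⟩ | ⟨_, hqe⟩
  · have hjq : j ∈ (GP hσ href).part w := by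
      rw [hqe]
      exact part_convex hσ (hqe ▸ hk) (hqe ▸ hl) hkj.le hjl.le
    exact hne ((GP hσ href).eq_of_mem_parts hp hq hj hjq)
  · have hkt : k ∈ τ.part w := by
      have := hqe ▸ hk; exact (mem_filter.1 this).1
    have hlt : l ∈ τ.part w := by
      have := hqe ▸ hl; exact (mem_filter.1 this).1
    have hjt : j ∈ τ.part w := part_convex hτ hkt hlt hkj.le hjl.le
    have hjw : τ.part j = τ.part w := (mem_part_iff_eq τ).1 hjt
    obtain ⟨v, rfl⟩ := exists_part_rep hp
    rcases part_GP_cases hσ href v with ⟨_, hpe⟩ | ⟨hv, hpe⟩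
    · have hkp : k ∈ (GP hσ href).part v := by
        rw [hpe]
        exact part_convex hσ (hpe ▸ hi) (hpe ▸ hj) hik.le hkj.le
      exact hne ((GP hσ href).eq_of_mem_parts hp hq hkp hk)
    · have hjv : j ∈ τ.part v := by
        have := hpe ▸ hj; exact (mem_filter.1 this).1
      have : τ.part v = τ.part w := ((mem_part_iff_eq τ).1 hjv).symm.trans hjw
      apply hne
      rw [hpe, hqe]
      exact evens_congr this

end BackwardD2
section BackwardDepth

variable {τ σ : Finpartition (univ : Finset (Fin n))}

lemma depth_GP_even (hτ : IsIntervalPart τ) (hσ : IsIntervalPart σ) (href : Refines σ τ)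
    {x : Fin n} (hx : Even (rnk τ σ x)) :
    blockDepth (GP hσ href) ((GP hσ href).part x) = 1 := by
  unfold blockDepth
  have : ((GP hσ href).parts.filter fun q => InnerTo (GP hσ href) ((GP hσ href).part x) q) = ∅ := by
    rw [Finset.filter_eq_empty_iff]
    rintro q hq ⟨hp, _, hne, i, hi, j, hj, hstr⟩
    obtain ⟨a, c, hIcc, ha, hc, _, _⟩ := tau_Icc hτ x
    have hra : Even (rnk τ σ a) := by rw [rnk_left (σ := σ) hIcc ha]; exact Even.zero
    have hae : a ∈ (GP hσ href).part x := by
      rw [part_GP_even hσ href hx]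
      exact mem_filter.2 ⟨ha, hra⟩
    obtain ⟨hia, haj⟩ := hstr a hae
    obtain ⟨w, rfl⟩ := exists_part_rep hq
    have hit : i ∈ τ.part w := part_GP_subset hσ href w hi
    have hjt : j ∈ τ.part w := part_GP_subset hσ href w hj
    have hat : a ∈ τ.part w := part_convex hτ hit hjt hia.le haj.le
    have h1 : τ.part a = τ.part w := (mem_part_iff_eq τ).1 hat
    have h2 : τ.part a = τ.part x := (mem_part_iff_eq τ).1 ha
    have : i ∈ Icc a c := by rw [← hIcc, ← h2, h1]; exact hit
    rw [mem_Icc] at this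
    exact absurd hia (not_lt.2 this.1)
  rw [this]
  simp

lemma depth_GP_odd (hτ : IsIntervalPart τ) (hσ : IsIntervalPart σ) (href : Refines σ τ)
    (hodd : ∀ C ∈ τ.parts, Odd (σ.parts.filter fun B => B ⊆ C).card)
    {x : Fin n} (hx : ¬ Even (rnk τ σ x)) :
    blockDepth (GP hσ href) ((GP hσ href).part x) = 2 := by
  obtain ⟨a, c, hIcc, ha, hc, _, _⟩ := tau_Icc hτ x
  obtain ⟨w, hwe, hwt, hwp⟩ := evens_eq_part hτ hσ href x
  have hmemq : evens τ σ x ∈ (GP hσ href).parts := by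
    rw [hwp]; exact (GP hσ href).part_mem.2 (mem_univ w)
  have hxp : x ∈ (GP hσ href).part x := (GP hσ href).mem_part (mem_univ x)
  have hxodd : x ∉ evens τ σ x := by
    rw [evens, mem_filter]; rintro ⟨_, h⟩; exact hx h
  have hne : (GP hσ href).part x ≠ evens τ σ x := by
    intro h; exact hxodd (h ▸ hxp)
  have hInner : InnerTo (GP hσ href) ((GP hσ href).part x) (evens τ σ x) := by
    refine ⟨(GP hσ href).part_mem.2 (mem_univ x), hmemq, hne, a, ?_, c, ?_, ?_⟩
    · exact mem_filter.2 ⟨ha, by rw [rnk_left (σ := σ) hIcc ha]; exact Even.zero⟩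
    · exact mem_filter.2 ⟨hc, rnk_right href hodd hIcc hc⟩
    · intro k hk
      rw [part_GP_odd hσ href hx] at hk
      exact odd_strict hσ href hodd hIcc ha hc hx k hk
  have huniq : ∀ q ∈ (GP hσ href).parts,
      InnerTo (GP hσ href) ((GP hσ href).part x) q → q = evens τ σ x := by
    rintro q hq ⟨_, _, hne', i, hi, j, hj, hstr⟩
    obtain ⟨hix, hxj⟩ := hstr x hxp
    obtain ⟨w', rfl⟩ := exists_part_rep hq
    rcases part_GP_cases hσ href w' with ⟨_, hqe⟩ | ⟨_, hqe⟩
    · exfalso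
      have hxq : x ∈ (GP hσ href).part w' := by
        rw [hqe]
        exact part_convex hσ (hqe ▸ hi) (hqe ▸ hj) hix.le hxj.le
      exact hne' ((mem_part_iff_eq (GP hσ href)).1 hxq)
    · have hit : i ∈ τ.part w' := part_GP_subset hσ href w' hi
      have hjt : j ∈ τ.part w' := part_GP_subset hσ href w' hj
      have hxt : x ∈ τ.part w' := part_convex hτ hit hjt hix.le hxj.le
      rw [hqe]
      exact evens_congr ((mem_part_iff_eq τ).1 hxt).symm
  have : ((GP hσ href).parts.filter fun q => InnerTo (GP hσ href) ((GP hσ href).part x) q)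
      = {evens τ σ x} := by
    ext q
    rw [mem_filter, mem_singleton]
    constructor
    · rintro ⟨hq, hI⟩; exact huniq q hq hI
    · rintro rfl; exact ⟨hmemq, hInner⟩
  unfold blockDepth
  rw [this]
  simp

lemma GP_isD2 (hn : 0 < n) (hτ : IsIntervalPart τ) (hσ : IsIntervalPart σ)
    (href : Refines σ τ)
    (hodd : ∀ C ∈ τ.parts, Odd (σ.parts.filter fun B => B ⊆ C).card) :
    IsD2 (GP hσ href) := by
  refine ⟨GP_noncrossing hτ hσ href, ?_, ?_, ?_⟩
  · intro p hp
    obtain ⟨w, rfl⟩ := exists_part_rep hp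
    by_cases hw : Even (rnk τ σ w)
    · rw [depth_GP_even hτ hσ href hw]; omega
    · rw [depth_GP_odd hτ hσ href hodd hw]
  · obtain ⟨a, c, hIcc, ha, _, _, _⟩ := tau_Icc hτ (⟨0, hn⟩ : Fin n)
    have hra : Even (rnk τ σ a) := by rw [rnk_left (σ := σ) hIcc ha]; exact Even.zero
    exact ⟨(GP hσ href).part a, (GP hσ href).part_mem.2 (mem_univ a),
      depth_GP_even hτ hσ href hra⟩
  · rintro ⟨p, hp, q, hq, hdp, hdq, x, hx, y, hy, hmax, hmin, hxy⟩
    obtain ⟨u, rfl⟩ := exists_part_rep hp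
    obtain ⟨v, rfl⟩ := exists_part_rep hq
    -- identify p with part x, q with part y
    have hpx : (GP hσ href).part u = (GP hσ href).part x :=
      ((mem_part_iff_eq (GP hσ href)).1 hx).symm
    have hqy : (GP hσ href).part v = (GP hσ href).part y :=
      ((mem_part_iff_eq (GP hσ href)).1 hy).symm
    rw [hpx] at hdp hx hmax
    rw [hqy] at hdq hy hmin
    have hox : ¬ Even (rnk τ σ x) := by
      intro h; rw [depth_GP_even hτ hσ href h] at hdp; omega
    have hoy : ¬ Even (rnk τ σ y) := by
      intro h; rw [depth_GP_even hτ hσ href h] at hdq; omega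
    obtain ⟨a, c, hIcc, ha, hc, hax, hxc⟩ := tau_Icc hτ x
    have hxltc : x < c := by
      rcases lt_or_eq_of_le hxc with h | h
      · exact h
      · exact absurd (h ▸ rnk_right href hodd hIcc hc) hox
    have hxlty : x < y := by rw [Fin.lt_def]; omega
    have hyc : y ∈ τ.part x := by
      rw [hIcc, mem_Icc]
      constructor
      · exact hax.trans hxlty.le
      · rw [Fin.le_def]; rw [Fin.lt_def] at hxltc; omega
    have htxy : τ.part x = τ.part y := ((mem_part_iff_eq τ).1 hyc).symm
    have hsxy : σ.part x ≠ σ.part y := by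
      intro h
      have : y ∈ (GP hσ href).part x := by
        rw [part_GP_odd hσ href hox, h]
        exact σ.mem_part (mem_univ y)
      exact absurd hxlty (not_lt.2 (hmax y this))
    have := rnk_succ hσ href hxy htxy hsxy
    apply hoy
    rw [this, Nat.even_add_one]
    exact hox

end BackwardDepth
section Forward

variable {P : Finpartition (univ : Finset (Fin n))}

/-- `x` lies in the convex hull of the block `p`. -/
def inHull (p : Finset (Fin n)) (x : Fin n) : Prop :=
  ∃ u ∈ p, ∃ v ∈ p, u ≤ x ∧ x ≤ v

lemma innerTo_trans {p q r : Finset (Fin n)} (h1 : InnerTo P p q) (h2 : InnerTo P q r) :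
    InnerTo P p r := by
  obtain ⟨hp, hq, hpq, i, hi, j, hj, hstr⟩ := h1
  obtain ⟨_, hr, hqr, i', hi', j', hj', hstr'⟩ := h2
  refine ⟨hp, hr, ?_, i', hi', j', hj', fun k hk => ?_⟩
  · rintro rfl
    obtain ⟨hii, _⟩ := hstr' i hi
    obtain ⟨hi'2, _⟩ := hstr i' hi'
    exact absurd (hii.trans hi'2) (lt_irrefl i')
  · obtain ⟨h1', h2'⟩ := hstr k hk
    exact ⟨(hstr' i hi).1.trans h1', h2'.trans (hstr' j hj).2⟩

lemma depth_two' (hd2 : ∀ p ∈ P.parts, blockDepth P p ≤ 2) {x : Fin n}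
    (h : blockDepth P (P.part x) ≠ 1) :
    ∃ q ∈ P.parts, InnerTo P (P.part x) q := by
  classical
  have hle := hd2 _ (P.part_mem.2 (mem_univ x))
  unfold blockDepth at h hle
  have : 0 < (P.parts.filter fun q => InnerTo P (P.part x) q).card := by omega
  obtain ⟨q, hq⟩ := Finset.card_pos.1 this
  rw [mem_filter] at hq
  exact ⟨q, hq.1, hq.2⟩

lemma outer_of_inner (hd2 : ∀ p ∈ P.parts, blockDepth P p ≤ 2) {p q : Finset (Fin n)}
    (hq : InnerTo P p q) : blockDepth P q = 1 := by
  classical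
  by_contra h
  obtain ⟨x, hx⟩ := P.nonempty_of_mem_parts hq.2.1
  have hqx : P.part x = q := P.part_eq_of_mem hq.2.1 hx
  obtain ⟨r, hr, hqr⟩ := depth_two' hd2 (by rwa [hqx])
  rw [hqx] at hqr
  have hpr : InnerTo P p r := innerTo_trans hq hqr
  have hsub : {q, r} ⊆ P.parts.filter fun s => InnerTo P p s := by
    intro s hs
    rw [mem_insert, mem_singleton] at hs
    rcases hs with rfl | rfl
    · exact mem_filter.2 ⟨hq.2.1, hq⟩
    · exact mem_filter.2 ⟨hr, hpr⟩
  have hqr' : q ≠ r := hqr.2.2.1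
  have h2 : 2 ≤ (P.parts.filter fun s => InnerTo P p s).card := by
    calc 2 = ({q, r} : Finset (Finset (Fin n))).card := by
            rw [Finset.card_insert_of_notMem (by simpa using hqr'), Finset.card_singleton]
      _ ≤ _ := Finset.card_le_card hsub
  have := hd2 p hq.1
  unfold blockDepth at this
  omega

lemma exists_depth1_hull (hd2 : ∀ p ∈ P.parts, blockDepth P p ≤ 2) (x : Fin n) :
    ∃ p ∈ P.parts, blockDepth P p = 1 ∧ inHull p x := by
  by_cases h : blockDepth P (P.part x) = 1
  · exact ⟨P.part x, P.part_mem.2 (mem_univ x), h,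
      x, P.mem_part (mem_univ x), x, P.mem_part (mem_univ x), le_refl x, le_refl x⟩
  · obtain ⟨q, hq, hinner⟩ := depth_two' hd2 h
    obtain ⟨i, hi, j, hj, hstr⟩ := hinner.2.2.2
    obtain ⟨h1, h2⟩ := hstr x (P.mem_part (mem_univ x))
    exact ⟨q, hq, outer_of_inner hd2 hinner, i, hi, j, hj, h1.le, h2.le⟩

lemma hull_disjoint_aux (hnc : IsNoncrossing P) {p q : Finset (Fin n)} {x : Fin n}
    (hp : p ∈ P.parts) (hq : q ∈ P.parts) (hdq : blockDepth P q = 1)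
    (hx : inHull p x) (hx' : inHull q x) (hne : p ≠ q)
    (hpn : p.Nonempty) (hqn : q.Nonempty)
    (hlt : p.min' hpn < q.min' hqn) : False := by
  classical
  set a := p.min' hpn with ha
  set b := p.max' hpn with hb
  set a' := q.min' hqn with ha'
  set b' := q.max' hqn with hb'
  have hdisj : ∀ z, z ∈ p → z ∈ q → False := by
    intro z h1 h2; exact hne (P.eq_of_mem_parts hp hq h1 h2)
  obtain ⟨u, hu, v, hv, huv1, huv2⟩ := hx
  obtain ⟨u', hu', v', hv', huv1', huv2'⟩ := hx'
  have hxb : x ≤ b := huv2.trans (p.le_max' v hv)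
  have hax' : a' ≤ x := (q.min'_le u' hu').trans huv1'
  have ha'b : a' ≤ b := hax'.trans hxb
  have ha'b_ne : a' ≠ b := fun h => hdisj b (p.max'_mem hpn) (h ▸ q.min'_mem hqn)
  have ha'ltb : a' < b := lt_of_le_of_ne ha'b ha'b_ne
  rcases le_or_gt b' b with hble | hblt
  · -- q nested strictly inside the hull of p : InnerTo q p, contradicting depth q = 1
    have hb'ne : b' ≠ b := fun h => hdisj b (p.max'_mem hpn) (h ▸ q.max'_mem hqn)
    have hb'lt : b' < b := lt_of_le_of_ne hble hb'ne
    have hinner : InnerTo P q p := by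
      refine ⟨hq, hp, hne.symm, a, p.min'_mem hpn, b, p.max'_mem hpn, fun k hk => ?_⟩
      exact ⟨hlt.trans_le' (le_refl a) |>.trans_le (q.min'_le k hk),
        (q.le_max' k hk).trans_lt hb'lt⟩
    have hmem : p ∈ P.parts.filter fun s => InnerTo P q s := mem_filter.2 ⟨hp, hinner⟩
    have : 0 < (P.parts.filter fun s => InnerTo P q s).card := Finset.card_pos.2 ⟨p, hmem⟩
    unfold blockDepth at hdq
    omega
  · -- crossing
    exact hnc ⟨p, hp, q, hq, hne, a, b, a', b', p.min'_mem hpn, p.max'_mem hpn,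
      q.min'_mem hqn, q.max'_mem hqn, hlt, ha'ltb, hblt⟩

lemma hull_disjoint (hnc : IsNoncrossing P) {p q : Finset (Fin n)} {x : Fin n}
    (hp : p ∈ P.parts) (hq : q ∈ P.parts) (hdp : blockDepth P p = 1)
    (hdq : blockDepth P q = 1) (hx : inHull p x) (hx' : inHull q x) : p = q := by
  by_contra hne
  have hpn : p.Nonempty := P.nonempty_of_mem_parts hp
  have hqn : q.Nonempty := P.nonempty_of_mem_parts hq
  rcases lt_trichotomy (p.min' hpn) (q.min' hqn) with h | h | h
  · exact hull_disjoint_aux hnc hp hq hdq hx hx' hne hpn hqn h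
  · exact hne (P.eq_of_mem_parts hp hq (h ▸ p.min'_mem hpn) (q.min'_mem hqn))
  · exact hull_disjoint_aux hnc hq hp hdp hx' hx (Ne.symm hne) hqn hpn h

lemma hull_closed (hnc : IsNoncrossing P) {p : Finset (Fin n)} {x y : Fin n}
    (hp : p ∈ P.parts) (hx : inHull p x) (hy : y ∈ P.part x) : inHull p y := by
  by_cases hpx : P.part x = p
  · have : y ∈ p := hpx ▸ hy
    exact ⟨y, this, y, this, le_refl y, le_refl y⟩
  · have hpn : p.Nonempty := P.nonempty_of_mem_parts hp
    set a := p.min' hpn with ha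
    set b := p.max' hpn with hb
    have hdisj : ∀ z, z ∈ P.part x → z ∈ p → False := by
      intro z h1 h2
      exact hpx (P.eq_of_mem_parts (P.part_mem.2 (mem_univ x)) hp h1 h2)
    obtain ⟨u, hu, v, hv, h1, h2⟩ := hx
    have hax : a ≤ x := (p.min'_le u hu).trans h1
    have hxb : x ≤ b := h2.trans (p.le_max' v hv)
    have haxs : a < x := lt_of_le_of_ne hax
      (fun h => hdisj x (P.mem_part (mem_univ x)) (h ▸ p.min'_mem hpn))
    have hxbs : x < b := lt_of_le_of_ne hxb
      (fun h => hdisj x (P.mem_part (mem_univ x)) (h.symm ▸ p.max'_mem hpn))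
    have hyp : y ∉ p := fun h => hdisj y hy h
    have hay : a < y ∧ y < b := by
      constructor
      · by_contra hya
        push_neg at hya
        have : y < a := lt_of_le_of_ne hya (fun h => hyp (h ▸ p.min'_mem hpn))
        exact hnc ⟨P.part x, P.part_mem.2 (mem_univ x), p, hp, hpx, y, x, a, b,
          hy, P.mem_part (mem_univ x), p.min'_mem hpn, p.max'_mem hpn, this, haxs, hxbs⟩
      · by_contra hby
        push_neg at hby
        have : b < y := lt_of_le_of_ne hby (fun h => hyp (h.symm ▸ p.max'_mem hpn))
        exact hnc ⟨p, hp, P.part x, P.part_mem.2 (mem_univ x), Ne.symm hpx, a, b, x, y,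
          p.min'_mem hpn, p.max'_mem hpn, P.mem_part (mem_univ x), hy, haxs, hxbs, this⟩
    exact ⟨a, p.min'_mem hpn, b, p.max'_mem hpn, hay.1.le, hay.2.le⟩

lemma inner_of_hull (hnc : IsNoncrossing P) {p : Finset (Fin n)} {x : Fin n}
    (hp : p ∈ P.parts) (hx : inHull p x) (hne : P.part x ≠ p) :
    InnerTo P (P.part x) p := by
  have hpn : p.Nonempty := P.nonempty_of_mem_parts hp
  refine ⟨P.part_mem.2 (mem_univ x), hp, hne, p.min' hpn, p.min'_mem hpn,
    p.max' hpn, p.max'_mem hpn, fun k hk => ?_⟩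
  have hkh : inHull p k := hull_closed hnc hp hx hk
  obtain ⟨u, hu, v, hv, h1, h2⟩ := hkh
  have hdisj : k ∉ p := by
    intro h
    exact hne (P.eq_of_mem_parts (P.part_mem.2 (mem_univ x)) hp hk h)
  constructor
  · exact lt_of_le_of_ne ((p.min'_le u hu).trans h1)
      (fun h => hdisj (h ▸ p.min'_mem hpn))
  · exact lt_of_le_of_ne (h2.trans (p.le_max' v hv))
      (fun h => hdisj (h.symm ▸ p.max'_mem hpn))

end Forward
section Forward2

variable {P : Finpartition (univ : Finset (Fin n))}

variable (P) in
/-- same block, and everything in between also in that block. -/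
def sigRel (i j : Fin n) : Prop :=
  ∀ k : Fin n, ((i ≤ k ∧ k ≤ j) ∨ (j ≤ k ∧ k ≤ i)) → P.part k = P.part i

lemma sigRel_part {i j : Fin n} (h : sigRel P i j) : P.part j = P.part i := by
  apply h j
  rcases le_total i j with h' | h'
  · exact Or.inl ⟨h', le_refl j⟩
  · exact Or.inr ⟨le_refl j, h'⟩

lemma sigRel_refl (i : Fin n) : sigRel P i i := by
  intro k hk
  have : k = i := by
    rcases hk with ⟨h1, h2⟩ | ⟨h1, h2⟩ <;> exact le_antisymm h2 h1
  rw [this]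

lemma sigRel_symm {i j : Fin n} (h : sigRel P i j) : sigRel P j i := by
  intro k hk
  rw [sigRel_part h]
  exact h k hk.symm

lemma between_helper {i j k m : Fin n}
    (hm : (i ≤ m ∧ m ≤ k) ∨ (k ≤ m ∧ m ≤ i)) :
    ((i ≤ m ∧ m ≤ j) ∨ (j ≤ m ∧ m ≤ i)) ∨ ((j ≤ m ∧ m ≤ k) ∨ (k ≤ m ∧ m ≤ j)) := by
  simp only [Fin.le_def] at *
  omega

lemma sigRel_trans {i j k : Fin n} (h1 : sigRel P i j) (h2 : sigRel P j k) :
    sigRel P i k := by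
  intro m hm
  rcases between_helper (j := j) hm with h | h
  · exact h1 m h
  · exact (h2 m h).trans (sigRel_part h1)

variable (P) in
def sigSetoid : Setoid (Fin n) :=
  ⟨sigRel P, ⟨sigRel_refl, sigRel_symm, sigRel_trans⟩⟩

open scoped Classical in
variable (P) in
noncomputable def Fsig : Finpartition (univ : Finset (Fin n)) :=
  Finpartition.ofSetoid (sigSetoid P)

variable (P) in
def tauRel (i j : Fin n) : Prop :=
  ∃ p ∈ P.parts, blockDepth P p = 1 ∧ inHull p i ∧ inHull p j

variable (P) in
def tauSetoid (hnc : IsNoncrossing P) (hd2 : ∀ p ∈ P.parts, blockDepth P p ≤ 2) :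
    Setoid (Fin n) where
  r := tauRel P
  iseqv := by
    constructor
    · intro i
      obtain ⟨p, hp, hd, hh⟩ := exists_depth1_hull hd2 i
      exact ⟨p, hp, hd, hh, hh⟩
    · rintro i j ⟨p, hp, hd, h1, h2⟩
      exact ⟨p, hp, hd, h2, h1⟩
    · rintro i j k ⟨p, hp, hdp, h1, h2⟩ ⟨q, hq, hdq, h3, h4⟩
      have : p = q := hull_disjoint hnc hp hq hdp hdq h2 h3
      exact ⟨p, hp, hdp, h1, this ▸ h4⟩

open scoped Classical in
variable (P) in
noncomputable def Ftau (hnc : IsNoncrossing P) (hd2 : ∀ p ∈ P.parts, blockDepth P p ≤ 2) :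
    Finpartition (univ : Finset (Fin n)) :=
  Finpartition.ofSetoid (tauSetoid P hnc hd2)

lemma mem_part_Fsig {i j : Fin n} : j ∈ (Fsig P).part i ↔ sigRel P i j := by
  unfold Fsig
  rw [part_ofSetoid, mem_filter]
  exact ⟨fun h => h.2, fun h => ⟨mem_univ j, h⟩⟩

lemma mem_part_Ftau {hnc : IsNoncrossing P} {hd2 : ∀ p ∈ P.parts, blockDepth P p ≤ 2}
    {i j : Fin n} : j ∈ (Ftau P hnc hd2).part i ↔ tauRel P i j := by
  unfold Ftau
  rw [part_ofSetoid, mem_filter]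
  exact ⟨fun h => h.2, fun h => ⟨mem_univ j, h⟩⟩

lemma part_Fsig_subset (i : Fin n) : (Fsig P).part i ⊆ P.part i := by
  intro j hj
  rw [mem_part_Fsig] at hj
  rw [mem_part_iff_eq]
  exact sigRel_part hj

/-- the `τ`-part of `x` is the hull of the unique depth-1 block over `x`. -/
lemma part_Ftau_eq {hnc : IsNoncrossing P} {hd2 : ∀ p ∈ P.parts, blockDepth P p ≤ 2}
    {x : Fin n} {p : Finset (Fin n)} (hp : p ∈ P.parts) (hdp : blockDepth P p = 1)
    (hx : inHull p x) (hpn : p.Nonempty) :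
    (Ftau P hnc hd2).part x = Icc (p.min' hpn) (p.max' hpn) := by
  ext y
  rw [mem_part_Ftau, mem_Icc]
  constructor
  · rintro ⟨q, hq, hdq, h1, h2⟩
    have : q = p := hull_disjoint hnc hq hp hdq hdp h1 hx
    subst this
    obtain ⟨u, hu, v, hv, hu1, hv1⟩ := h2
    exact ⟨(q.min'_le u hu).trans hu1, hv1.trans (q.le_max' v hv)⟩
  · rintro ⟨h1, h2⟩
    exact ⟨p, hp, hdp, hx, p.min' hpn, p.min'_mem hpn, p.max' hpn, p.max'_mem hpn, h1, h2⟩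

lemma Ftau_interval (hnc : IsNoncrossing P) (hd2 : ∀ p ∈ P.parts, blockDepth P p ≤ 2) :
    IsIntervalPart (Ftau P hnc hd2) := by
  intro B hB
  obtain ⟨w, rfl⟩ := exists_part_rep hB
  obtain ⟨p, hp, hdp, hh⟩ := exists_depth1_hull hd2 w
  have hpn : p.Nonempty := P.nonempty_of_mem_parts hp
  exact ⟨p.min' hpn, p.max' hpn, part_Ftau_eq hp hdp hh hpn⟩

lemma sig_convex_helper {w a b c m : Fin n} (hac : a ≤ c) (hcb : c ≤ b)
    (hm : (w ≤ m ∧ m ≤ c) ∨ (c ≤ m ∧ m ≤ w)) :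
    ((w ≤ m ∧ m ≤ a) ∨ (a ≤ m ∧ m ≤ w)) ∨ ((w ≤ m ∧ m ≤ b) ∨ (b ≤ m ∧ m ≤ w)) := by
  simp only [Fin.le_def] at *
  omega

lemma Fsig_interval : IsIntervalPart (Fsig P) := by
  intro B hB
  obtain ⟨w, rfl⟩ := exists_part_rep hB
  apply convex_eq_Icc
  · exact ⟨w, (Fsig P).mem_part (mem_univ w)⟩
  · intro a ha b hb c hac hcb
    rw [mem_part_Fsig] at *
    intro m hm
    rcases sig_convex_helper hac hcb hm with h | h
    · exact ha m h
    · exact hb m h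

lemma Fsig_refines (hnc : IsNoncrossing P) (hd2 : ∀ p ∈ P.parts, blockDepth P p ≤ 2) :
    Refines (Fsig P) (Ftau P hnc hd2) := by
  intro B hB
  obtain ⟨w, rfl⟩ := exists_part_rep hB
  refine ⟨(Ftau P hnc hd2).part w, (Ftau P hnc hd2).part_mem.2 (mem_univ w), ?_⟩
  intro y hy
  rw [mem_part_Fsig] at hy
  rw [mem_part_Ftau]
  obtain ⟨p, hp, hdp, hh⟩ := exists_depth1_hull hd2 w
  have hyP : y ∈ P.part w := (mem_part_iff_eq P).2 (sigRel_part hy)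
  exact ⟨p, hp, hdp, hh, hull_closed hnc hp hh hyP⟩

end Forward2
section Forward3

variable {P : Finpartition (univ : Finset (Fin n))}

lemma two_inner_absurd (hd2 : ∀ p ∈ P.parts, blockDepth P p ≤ 2) {p q r : Finset (Fin n)}
    (h1 : InnerTo P p q) (h2 : InnerTo P p r) (hqr : q ≠ r) : False := by
  classical
  have hsub : {q, r} ⊆ P.parts.filter fun s => InnerTo P p s := by
    intro s hs
    rw [mem_insert, mem_singleton] at hs
    rcases hs with rfl | rfl
    · exact mem_filter.2 ⟨h1.2.1, h1⟩
    · exact mem_filter.2 ⟨h2.2.1, h2⟩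
  have hcard : 2 ≤ (P.parts.filter fun s => InnerTo P p s).card := by
    calc 2 = ({q, r} : Finset (Finset (Fin n))).card := by
          rw [Finset.card_insert_of_notMem (by simpa using hqr), Finset.card_singleton]
      _ ≤ _ := Finset.card_le_card hsub
  have := hd2 p h1.1
  unfold blockDepth at this
  omega

lemma depth_pos (x : Fin n) : blockDepth P (P.part x) = 1 ∨ 2 ≤ blockDepth P (P.part x) := by
  unfold blockDepth
  omega

/-- depth-2 blocks are intervals: they coincide with their `Fsig` block. -/
lemma depth2_part_eq (hnc : IsNoncrossing P) (hd2 : ∀ p ∈ P.parts, blockDepth P p ≤ 2)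
    {x : Fin n} (hdx : blockDepth P (P.part x) = 2) : P.part x = (Fsig P).part x := by
  apply Finset.Subset.antisymm _ (part_Fsig_subset x)
  intro w hw
  rw [mem_part_Fsig]
  intro k hk
  by_cases hkP : k ∈ P.part x
  · exact (mem_part_iff_eq P).1 hkP
  exfalso
  have hxw : P.part w = P.part x := (mem_part_iff_eq P).1 hw
  have hne : P.part k ≠ P.part x := by
    intro h; exact hkP (h ▸ P.mem_part (mem_univ k))
  have hdisj : ∀ m, m ∈ P.part k → m ∈ P.part x → False := fun m h1 h2 =>
    hne (P.eq_of_mem_parts (P.part_mem.2 (mem_univ k)) (P.part_mem.2 (mem_univ x)) h1 h2)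
  -- strict bounds u < k < v with u, v ∈ P.part x
  obtain ⟨u, v, hu, hv, huk, hkv⟩ : ∃ u v : Fin n, u ∈ P.part x ∧ v ∈ P.part x ∧
      u < k ∧ k < v := by
    rcases hk with ⟨h1, h2⟩ | ⟨h1, h2⟩
    · exact ⟨x, w, P.mem_part (mem_univ x), hw,
        lt_of_le_of_ne h1 (fun h => hkP (by rw [← h]; exact P.mem_part (mem_univ x))),
        lt_of_le_of_ne h2 (fun h => hkP (by rw [h]; exact hw))⟩
    · exact ⟨w, x, hw, P.mem_part (mem_univ x),
        lt_of_le_of_ne h1 (fun h => hkP (by rw [← h]; exact hw)),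
        lt_of_le_of_ne h2 (fun h => hkP (by rw [h]; exact P.mem_part (mem_univ x)))⟩
  have hInner : InnerTo P (P.part k) (P.part x) := by
    refine ⟨P.part_mem.2 (mem_univ k), P.part_mem.2 (mem_univ x), hne, u, hu, v, hv, fun m hm => ?_⟩
    have hmP : m ∉ P.part x := fun h => hdisj m hm h
    constructor
    · by_contra hum
      push_neg at hum
      have hmu : m < u := lt_of_le_of_ne hum (fun h => hmP (h ▸ hu))
      exact hnc ⟨P.part k, P.part_mem.2 (mem_univ k), P.part x, P.part_mem.2 (mem_univ x),
        hne, m, k, u, v, hm, P.mem_part (mem_univ k), hu, hv, hmu, huk, hkv⟩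
    · by_contra hmv
      push_neg at hmv
      have hvm : v < m := lt_of_le_of_ne hmv (fun h => hmP (h.symm ▸ hv))
      exact hnc ⟨P.part x, P.part_mem.2 (mem_univ x), P.part k, P.part_mem.2 (mem_univ k),
        Ne.symm hne, u, v, k, m, hu, hv, P.mem_part (mem_univ k), hm, huk, hkv, hvm⟩
  obtain ⟨O, hO, hOI⟩ := depth_two' hd2 (by omega : blockDepth P (P.part x) ≠ 1)
  exact two_inner_absurd hd2 hInner (innerTo_trans hInner hOI) hOI.2.2.1

lemma depth1_part_Ftau {hnc : IsNoncrossing P} {hd2 : ∀ p ∈ P.parts, blockDepth P p ≤ 2}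
    {x : Fin n} (hdx : blockDepth P (P.part x) = 1) :
    ∃ hpn : (P.part x).Nonempty, (Ftau P hnc hd2).part x =
      Icc ((P.part x).min' hpn) ((P.part x).max' hpn) := by
  have hpn : (P.part x).Nonempty := ⟨x, P.mem_part (mem_univ x)⟩
  exact ⟨hpn, part_Ftau_eq (P.part_mem.2 (mem_univ x)) hdx
    ⟨x, P.mem_part (mem_univ x), x, P.mem_part (mem_univ x), le_refl x, le_refl x⟩ hpn⟩

lemma color_aux (hnc : IsNoncrossing P) (hd2 : ∀ p ∈ P.parts, blockDepth P p ≤ 2)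
    (hadj : ¬ ∃ p ∈ P.parts, ∃ q ∈ P.parts, blockDepth P p = 2 ∧ blockDepth P q = 2 ∧
      ∃ x ∈ p, ∃ y ∈ q, (∀ a ∈ p, a ≤ x) ∧ (∀ b ∈ q, y ≤ b) ∧ (x : ℕ) + 1 = (y : ℕ)) :
    ∀ m : ℕ, ∀ x : Fin n, (x : ℕ) = m →
      (Even (rnk (Ftau P hnc hd2) (Fsig P) x) ↔ blockDepth P (P.part x) = 1) := by
  intro m
  induction m using Nat.strong_induction_on with
  | _ m IH =>
  rintro x rfl
  set τ' := Ftau P hnc hd2 with hτ'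
  set σ' := Fsig P with hσ'
  obtain ⟨p, hp, hdp, hhx⟩ := exists_depth1_hull hd2 x
  have hpn : p.Nonempty := P.nonempty_of_mem_parts hp
  set a := p.min' hpn with ha
  set c := p.max' hpn with hc
  have hIcc : τ'.part x = Icc a c := part_Ftau_eq hp hdp hhx hpn
  have hax : a ≤ x := by
    obtain ⟨u, hu, v, hv, h1, h2⟩ := hhx
    exact (p.min'_le u hu).trans h1
  have hxc : x ≤ c := by
    obtain ⟨u, hu, v, hv, h1, h2⟩ := hhx
    exact h2.trans (p.le_max' v hv)
  have haC : a ∈ τ'.part x := by rw [hIcc, mem_Icc]; exact ⟨le_refl a, hax.trans hxc⟩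
  by_cases hxa : x = a
  · -- x is the left endpoint: rank 0, and its block is the depth-1 block p
    have h1 : P.part x = p := by rw [hxa]; exact P.part_eq_of_mem hp (p.min'_mem hpn)
    have h2 : rnk τ' σ' x = 0 := by rw [hxa]; exact rnk_left hIcc haC
    rw [h2, h1]
    simp [hdp]
  · -- x has a predecessor y in the same τ'-part
    have hax' : a < x := lt_of_le_of_ne hax (Ne.symm hxa)
    have hxpos : 0 < (x : ℕ) := by
      rw [Fin.lt_def] at hax'; omega
    set y : Fin n := ⟨(x : ℕ) - 1, by omega⟩ with hy
    have hyx : (y : ℕ) + 1 = (x : ℕ) := by simp [hy]; omega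
    have hylt : y < x := by rw [Fin.lt_def]; simp [hy]; omega
    have hyC : y ∈ τ'.part x := by
      rw [hIcc, mem_Icc]
      refine ⟨?_, hylt.le.trans hxc⟩
      rw [Fin.le_def] at hax ⊢
      simp [hy]; omega
    have htyx : τ'.part y = τ'.part x := (mem_part_iff_eq τ').1 hyC
    have hint : IsIntervalPart σ' := Fsig_interval
    have href : Refines σ' τ' := Fsig_refines hnc hd2
    have hcases : ∀ z : Fin n, blockDepth P (P.part z) = 1 ∨ blockDepth P (P.part z) = 2 := by
      intro z
      have := hd2 _ (P.part_mem.2 (mem_univ z))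
      unfold blockDepth at *
      omega
    by_cases hsame : σ'.part y = σ'.part x
    · have hr : rnk τ' σ' y = rnk τ' σ' x := rnk_eq_of_part_eq hint href hsame
      have hPyx : P.part x = P.part y := by
        have : x ∈ σ'.part y := hsame ▸ σ'.mem_part (mem_univ x)
        rw [mem_part_Fsig] at this
        exact sigRel_part this
      rw [← hr, hPyx]
      exact IH (y : ℕ) (by omega) y rfl
    · have hr : rnk τ' σ' x = rnk τ' σ' y + 1 := rnk_succ hint href hyx htyx hsame
      have hPne : P.part x ≠ P.part y := by
        intro hPeq
        apply hsame
        have hsig : sigRel P y x := by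
          intro k hk
          have hk' : k = y ∨ k = x := by
            rcases hk with ⟨h1, h2⟩ | ⟨h1, h2⟩ <;>
            · rw [Fin.le_def] at h1 h2
              have : (k : ℕ) = (y : ℕ) ∨ (k : ℕ) = (x : ℕ) := by omega
              rcases this with h | h
              · exact Or.inl (Fin.ext h)
              · exact Or.inr (Fin.ext h)
          rcases hk' with h | h
          · rw [h]
          · rw [h]
            exact hPeq
        exact ((mem_part_iff_eq σ').1 (mem_part_Fsig.2 hsig)).symm
      have nb1 : ¬ (blockDepth P (P.part x) = 1 ∧ blockDepth P (P.part y) = 1) := by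
        rintro ⟨hx1, hy1⟩
        obtain ⟨hpnx, hxIcc⟩ := depth1_part_Ftau (hnc := hnc) (hd2 := hd2) hx1
        obtain ⟨hpny, hyIcc⟩ := depth1_part_Ftau (hnc := hnc) (hd2 := hd2) hy1
        have h1 : Icc ((P.part x).min' hpnx) ((P.part x).max' hpnx)
            = Icc ((P.part y).min' hpny) ((P.part y).max' hpny) := by
          rw [← hxIcc, ← htyx, hyIcc]
        have hminmem : (P.part x).min' hpnx ∈
            Icc ((P.part y).min' hpny) ((P.part y).max' hpny) := by
          rw [← h1, mem_Icc]
          exact ⟨le_refl _, (P.part x).min'_le _ ((P.part x).max'_mem hpnx) |>.trans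
            (le_refl _)⟩
        rw [mem_Icc] at hminmem
        have hhy : inHull (P.part y) ((P.part x).min' hpnx) :=
          ⟨(P.part y).min' hpny, (P.part y).min'_mem hpny,
           (P.part y).max' hpny, (P.part y).max'_mem hpny, hminmem.1, hminmem.2⟩
        have hhx : inHull (P.part x) ((P.part x).min' hpnx) :=
          ⟨_, (P.part x).min'_mem hpnx, _, (P.part x).min'_mem hpnx, le_refl _, le_refl _⟩
        exact hPne (hull_disjoint hnc (P.part_mem.2 (mem_univ x)) (P.part_mem.2 (mem_univ y))
          hx1 hy1 hhx hhy)
      have nb2 : ¬ (blockDepth P (P.part x) = 2 ∧ blockDepth P (P.part y) = 2) := by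
        rintro ⟨hx2, hy2⟩
        have hXs : P.part x = σ'.part x := depth2_part_eq hnc hd2 hx2
        have hYs : P.part y = σ'.part y := depth2_part_eq hnc hd2 hy2
        apply hadj
        refine ⟨P.part y, P.part_mem.2 (mem_univ y), P.part x, P.part_mem.2 (mem_univ x),
          hy2, hx2, y, P.mem_part (mem_univ y), x, P.mem_part (mem_univ x), ?_, ?_, hyx⟩
        · intro a' ha'
          by_contra hya'
          push_neg at hya'
          have hxa' : x ≤ a' := by
            rw [Fin.le_def]; rw [Fin.lt_def] at hya'; omega
          have : x ∈ σ'.part y :=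
            part_convex hint (σ'.mem_part (mem_univ y)) (hYs ▸ ha') hylt.le hxa'
          exact hsame ((mem_part_iff_eq σ').1 this).symm
        · intro b' hb'
          by_contra hb'x
          push_neg at hb'x
          have hb'y : b' ≤ y := by
            rw [Fin.le_def]; rw [Fin.lt_def] at hb'x; omega
          have : y ∈ σ'.part x :=
            part_convex hint (hXs ▸ hb') (σ'.mem_part (mem_univ x)) hb'y hylt.le
          exact hsame ((mem_part_iff_eq σ').1 this)
      have hIHy : Even (rnk τ' σ' y) ↔ blockDepth P (P.part y) = 1 :=
        IH (y : ℕ) (by omega) y rfl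
      rw [hr, Nat.even_add_one]
      rcases hcases x with hx' | hx' <;> rcases hcases y with hy' | hy'
      · exact absurd ⟨hx', hy'⟩ nb1
      · simp only [hx', iff_true]
        rw [hIHy, hy']
        omega
      · simp only [hx']
        rw [hIHy, hy']
        simp
      · exact absurd ⟨hx', hy'⟩ nb2

end Forward3
section Forward4

variable {P : Finpartition (univ : Finset (Fin n))}
variable {hnc : IsNoncrossing P} {hd2 : ∀ p ∈ P.parts, blockDepth P p ≤ 2}

lemma Ftau_odd (hnc : IsNoncrossing P) (hd2 : ∀ p ∈ P.parts, blockDepth P p ≤ 2)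
    (hadj : ¬ ∃ p ∈ P.parts, ∃ q ∈ P.parts, blockDepth P p = 2 ∧ blockDepth P q = 2 ∧
      ∃ x ∈ p, ∃ y ∈ q, (∀ a ∈ p, a ≤ x) ∧ (∀ b ∈ q, y ≤ b) ∧ (x : ℕ) + 1 = (y : ℕ)) :
    ∀ C ∈ (Ftau P hnc hd2).parts,
      Odd ((Fsig P).parts.filter fun B => B ⊆ C).card := by
  intro C hC
  obtain ⟨w, rfl⟩ := exists_part_rep hC
  set τ' := Ftau P hnc hd2 with hτ'
  set σ' := Fsig P with hσ'
  obtain ⟨p, hp, hdp, hh⟩ := exists_depth1_hull hd2 w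
  have hpn : p.Nonempty := P.nonempty_of_mem_parts hp
  set a := p.min' hpn with ha
  set c := p.max' hpn with hc
  have hIcc : τ'.part w = Icc a c := part_Ftau_eq hp hdp hh hpn
  have hac : a ≤ c := p.min'_le _ (p.max'_mem hpn)
  have hcC : c ∈ τ'.part w := by rw [hIcc, mem_Icc]; exact ⟨hac, le_refl c⟩
  have hpc : τ'.part c = τ'.part w := (mem_part_iff_eq τ').1 hcC
  have hmax : ∀ z ∈ τ'.part c, z ≤ c := by
    intro z hz
    rw [hpc, hIcc, mem_Icc] at hz
    exact hz.2
  have hcount := count_eq_rnk_max (τ := τ') (σ := σ') (Fsig_refines hnc hd2) c hmax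
  rw [hpc] at hcount
  rw [hcount]
  have hPc : P.part c = p := P.part_eq_of_mem hp (p.max'_mem hpn)
  have heven : Even (rnk τ' σ' c) := by
    rw [color_aux hnc hd2 hadj (c : ℕ) c rfl, hPc]
    exact hdp
  exact heven.add_one

lemma GF_iff (hnc : IsNoncrossing P) (hd2 : ∀ p ∈ P.parts, blockDepth P p ≤ 2)
    (hadj : ¬ ∃ p ∈ P.parts, ∃ q ∈ P.parts, blockDepth P p = 2 ∧ blockDepth P q = 2 ∧
      ∃ x ∈ p, ∃ y ∈ q, (∀ a ∈ p, a ≤ x) ∧ (∀ b ∈ q, y ≤ b) ∧ (x : ℕ) + 1 = (y : ℕ))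
    (i j : Fin n) :
    bRel (Ftau P hnc hd2) (Fsig P) i j ↔ P.part i = P.part j := by
  set τ' := Ftau P hnc hd2 with hτ'
  set σ' := Fsig P with hσ'
  have hcases : ∀ z : Fin n, blockDepth P (P.part z) = 1 ∨ blockDepth P (P.part z) = 2 := by
    intro z
    have := hd2 _ (P.part_mem.2 (mem_univ z))
    unfold blockDepth at *
    omega
  have hd1inj : ∀ u v : Fin n, blockDepth P (P.part u) = 1 → blockDepth P (P.part v) = 1 →
      τ'.part u = τ'.part v → P.part u = P.part v := by
    intro u v hu1 hv1 ht
    obtain ⟨hpnu, huIcc⟩ := depth1_part_Ftau (hnc := hnc) (hd2 := hd2) hu1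
    obtain ⟨hpnv, hvIcc⟩ := depth1_part_Ftau (hnc := hnc) (hd2 := hd2) hv1
    have h1 : Icc ((P.part u).min' hpnu) ((P.part u).max' hpnu)
        = Icc ((P.part v).min' hpnv) ((P.part v).max' hpnv) := by
      rw [← huIcc, ht, hvIcc]
    have hminmem : (P.part u).min' hpnu ∈
        Icc ((P.part v).min' hpnv) ((P.part v).max' hpnv) := by
      rw [← h1, mem_Icc]
      exact ⟨le_refl _, (P.part u).min'_le _ ((P.part u).max'_mem hpnu)⟩
    rw [mem_Icc] at hminmem
    exact hull_disjoint hnc (P.part_mem.2 (mem_univ u)) (P.part_mem.2 (mem_univ v)) hu1 hv1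
      ⟨_, (P.part u).min'_mem hpnu, _, (P.part u).min'_mem hpnu, le_refl _, le_refl _⟩
      ⟨(P.part v).min' hpnv, (P.part v).min'_mem hpnv,
       (P.part v).max' hpnv, (P.part v).max'_mem hpnv, hminmem.1, hminmem.2⟩
  constructor
  · rintro (h | ⟨ht, hei, hej⟩)
    · have : j ∈ σ'.part i := by rw [h]; exact σ'.mem_part (mem_univ j)
      rw [mem_part_Fsig] at this
      exact (sigRel_part this).symm
    · have hi1 : blockDepth P (P.part i) = 1 := by
        rw [← color_aux hnc hd2 hadj (i : ℕ) i rfl]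
        exact hei
      have hj1 : blockDepth P (P.part j) = 1 := by
        rw [← color_aux hnc hd2 hadj (j : ℕ) j rfl]
        exact hej
      exact hd1inj i j hi1 hj1 ht
  · intro h
    rcases hcases i with h1 | h2
    · have hj1 : blockDepth P (P.part j) = 1 := by rw [← h]; exact h1
      refine Or.inr ⟨?_, ?_, ?_⟩
      · obtain ⟨hpni, hiIcc⟩ := depth1_part_Ftau (hnc := hnc) (hd2 := hd2) h1
        obtain ⟨hpnj, hjIcc⟩ := depth1_part_Ftau (hnc := hnc) (hd2 := hd2) hj1
        rw [hiIcc, hjIcc]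
        simp only [h]
      · rw [color_aux hnc hd2 hadj (i : ℕ) i rfl]; exact h1
      · rw [color_aux hnc hd2 hadj (j : ℕ) j rfl]; exact hj1
    · have hj2 : blockDepth P (P.part j) = 2 := by rw [← h]; exact h2
      left
      rw [← depth2_part_eq hnc hd2 h2, ← depth2_part_eq hnc hd2 hj2]
      exact h

lemma GF_eq (hnc : IsNoncrossing P) (hd2 : ∀ p ∈ P.parts, blockDepth P p ≤ 2)
    (hadj : ¬ ∃ p ∈ P.parts, ∃ q ∈ P.parts, blockDepth P p = 2 ∧ blockDepth P q = 2 ∧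
      ∃ x ∈ p, ∃ y ∈ q, (∀ a ∈ p, a ≤ x) ∧ (∀ b ∈ q, y ≤ b) ∧ (x : ℕ) + 1 = (y : ℕ))
    (hσ' : IsIntervalPart (Fsig P)) (href' : Refines (Fsig P) (Ftau P hnc hd2)) :
    GP hσ' href' = P := by
  unfold GP
  exact ofSetoid_eq P _ (GF_iff hnc hd2 hadj)

end Forward4
section FG

variable {τ σ : Finpartition (univ : Finset (Fin n))}

lemma mem_part_GP {hσ : IsIntervalPart σ} {href : Refines σ τ} {i j : Fin n} :
    j ∈ (GP hσ href).part i ↔ bRel τ σ i j := by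
  unfold GP
  rw [part_ofSetoid, mem_filter]
  exact ⟨fun h => h.2, fun h => ⟨mem_univ j, h⟩⟩

lemma FG_sig_le (hσ : IsIntervalPart σ) (href : Refines σ τ) :
    ∀ d : ℕ, ∀ i j : Fin n, (j : ℕ) - (i : ℕ) = d → i ≤ j →
      sigRel (GP hσ href) i j → σ.part i = σ.part j := by
  intro d
  induction d using Nat.strong_induction_on with
  | _ d IH =>
  intro i j hd hij hsig
  rcases Nat.eq_or_lt_of_le (Fin.le_def.1 hij) with heq | hlt
  · rw [Fin.ext heq]
  · have hjlt := j.isLt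
    set y : Fin n := ⟨(i : ℕ) + 1, by omega⟩ with hy
    have hyv : (i : ℕ) + 1 = (y : ℕ) := rfl
    have hiy : i ≤ y := by rw [Fin.le_def]; simp [hy]
    have hyj : y ≤ j := by rw [Fin.le_def]; simp [hy]; omega
    have hsig_yj : sigRel (GP hσ href) y j := by
      intro k hk
      have hside : (i ≤ k ∧ k ≤ j) ∨ (j ≤ k ∧ k ≤ i) := by
        rcases hk with ⟨h1, h2⟩ | ⟨h1, h2⟩
        · exact Or.inl ⟨hiy.trans h1, h2⟩
        · exact Or.inl ⟨hij.trans h1, h2.trans hyj⟩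
      have h1 := hsig k hside
      have h2 := hsig y (Or.inl ⟨hiy, hyj⟩)
      rw [h1, ← h2]
    have hstep : σ.part i = σ.part y := by
      have hPiy : (GP hσ href).part y = (GP hσ href).part i :=
        hsig y (Or.inl ⟨hiy, hyj⟩)
      have hmem : y ∈ (GP hσ href).part i := (mem_part_iff_eq _).2 hPiy
      rcases mem_part_GP.1 hmem with h | ⟨ht, hevi, hevy⟩
      · exact h
      · by_contra hne
        have := rnk_succ hσ href hyv ht hne
        rw [this, Nat.even_add_one] at hevy
        exact hevy hevi
    have htail : σ.part y = σ.part j :=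
      IH ((j : ℕ) - (y : ℕ)) (by omega) y j rfl hyj hsig_yj
    exact hstep.trans htail

lemma FG_sig (hσ : IsIntervalPart σ) (href : Refines σ τ) (i j : Fin n) :
    sigRel (GP hσ href) i j ↔ σ.part i = σ.part j := by
  constructor
  · intro h
    rcases le_total i j with hij | hji
    · exact FG_sig_le hσ href _ i j rfl hij h
    · exact (FG_sig_le hσ href _ j i rfl hji (sigRel_symm h)).symm
  · intro h k hk
    have hkσ : k ∈ σ.part i := by
      rcases hk with ⟨h1, h2⟩ | ⟨h1, h2⟩
      · exact part_convex hσ (σ.mem_part (mem_univ i))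
          (by rw [h]; exact σ.mem_part (mem_univ j)) h1 h2
      · exact part_convex hσ (by rw [h]; exact σ.mem_part (mem_univ j))
          (σ.mem_part (mem_univ i)) h1 h2
    have : k ∈ (GP hσ href).part i :=
      mem_part_GP.2 (Or.inl ((mem_part_iff_eq σ).1 hkσ).symm)
    exact (mem_part_iff_eq _).1 this

lemma FG_tau (hτ : IsIntervalPart τ) (hσ : IsIntervalPart σ) (href : Refines σ τ)
    (hodd : ∀ C ∈ τ.parts, Odd (σ.parts.filter fun B => B ⊆ C).card) (i j : Fin n) :
    tauRel (GP hσ href) i j ↔ τ.part i = τ.part j := by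
  constructor
  · rintro ⟨p, hpP, hdp, hi, hj⟩
    obtain ⟨w, rfl⟩ := exists_part_rep hpP
    have hevw : Even (rnk τ σ w) := by
      by_contra ho
      rw [depth_GP_odd hτ hσ href hodd ho] at hdp
      omega
    have hpe : (GP hσ href).part w = evens τ σ w := part_GP_even hσ href hevw
    have hsub : (GP hσ href).part w ⊆ τ.part w := part_GP_subset hσ href w
    obtain ⟨aw, cw, hIcc, _, _, _, _⟩ := tau_Icc hτ w
    have hmem : ∀ z : Fin n, inHull ((GP hσ href).part w) z → z ∈ τ.part w := by
      rintro z ⟨u, hu, v, hv, h1, h2⟩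
      have hu' : u ∈ τ.part w := hsub hu
      have hv' : v ∈ τ.part w := hsub hv
      exact part_convex hτ hu' hv' h1 h2
    have h1 : τ.part i = τ.part w := (mem_part_iff_eq τ).1 (hmem i hi)
    have h2 : τ.part j = τ.part w := (mem_part_iff_eq τ).1 (hmem j hj)
    rw [h1, h2]
  · intro h
    obtain ⟨a, c, hIcc, ha, hc, hai, hic⟩ := tau_Icc hτ i
    have hra : Even (rnk τ σ a) := by rw [rnk_left (σ := σ) hIcc ha]; exact Even.zero
    have hrc : Even (rnk τ σ c) := rnk_right href hodd hIcc hc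
    have hpa : τ.part a = τ.part i := (mem_part_iff_eq τ).1 ha
    have hdp1 : blockDepth (GP hσ href) ((GP hσ href).part a) = 1 :=
      depth_GP_even hτ hσ href hra
    have hmema : a ∈ (GP hσ href).part a := by
      rw [part_GP_even hσ href hra, evens, mem_filter]
      exact ⟨τ.mem_part (mem_univ a), hra⟩
    have hmemc : c ∈ (GP hσ href).part a := by
      rw [part_GP_even hσ href hra, evens, mem_filter, hpa]
      exact ⟨hc, hrc⟩
    have hjmem : j ∈ τ.part i := by rw [h]; exact τ.mem_part (mem_univ j)
    rw [hIcc, mem_Icc] at hjmem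
    exact ⟨(GP hσ href).part a, (GP hσ href).part_mem.2 (mem_univ a), hdp1,
      ⟨a, hmema, c, hmemc, hai, hic⟩, ⟨a, hmema, c, hmemc, hjmem.1, hjmem.2⟩⟩

lemma FG_eq_sig (hσ : IsIntervalPart σ) (href : Refines σ τ) :
    Fsig (GP hσ href) = σ := by
  unfold Fsig
  exact ofSetoid_eq σ _ (FG_sig hσ href)

lemma FG_eq_tau (hτ : IsIntervalPart τ) (hσ : IsIntervalPart σ) (href : Refines σ τ)
    (hodd : ∀ C ∈ τ.parts, Odd (σ.parts.filter fun B => B ⊆ C).card)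
    (hnc' : IsNoncrossing (GP hσ href))
    (hd2' : ∀ p ∈ (GP hσ href).parts, blockDepth (GP hσ href) p ≤ 2) :
    Ftau (GP hσ href) hnc' hd2' = τ := by
  unfold Ftau
  exact ofSetoid_eq τ _ (FG_tau hτ hσ href hodd)

end FG


/-- Proposition 3.1: for every `n ≥ 1` there is a bijection between the family
`D₂(n)` of decomposable non-crossing partitions of `{1,…,n}` of depth at most
`2` and the set of pairs `(τ, σ)` where `τ` is an interval partition of
`{1,…,n}` and `σ` is an odd interval subpartition of `τ`. -/
theorem stmt3 (n : ℕ) (hn : 0 < n) :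
    Nonempty
      ({P : Finpartition (Finset.univ : Finset (Fin n)) // IsD2 P} ≃
        {ts : Finpartition (Finset.univ : Finset (Fin n)) ×
              Finpartition (Finset.univ : Finset (Fin n)) // IsOddPair ts.1 ts.2}) := by
  constructor
  refine
    { toFun := fun X => ⟨(Ftau X.1 X.2.1 X.2.2.1, Fsig X.1),
        Ftau_interval X.2.1 X.2.2.1, Fsig_interval,
        Fsig_refines X.2.1 X.2.2.1, Ftau_odd X.2.1 X.2.2.1 X.2.2.2.2⟩
      invFun := fun Y => ⟨GP Y.2.2.1 Y.2.2.2.1,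
        GP_isD2 hn Y.2.1 Y.2.2.1 Y.2.2.2.1 Y.2.2.2.2⟩
      left_inv := ?_
      right_inv := ?_ }
  · rintro ⟨P, hP⟩
    apply Subtype.ext
    exact GF_eq hP.1 hP.2.1 hP.2.2.2 _ _
  · rintro ⟨⟨τ, σ⟩, hpair⟩
    apply Subtype.ext
    have h1 := FG_eq_tau hpair.1 hpair.2.1 hpair.2.2.1 hpair.2.2.2
      (GP_isD2 hn hpair.1 hpair.2.1 hpair.2.2.1 hpair.2.2.2).1
      (GP_isD2 hn hpair.1 hpair.2.1 hpair.2.2.1 hpair.2.2.2).2.1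
    have h2 := FG_eq_sig hpair.2.1 hpair.2.2.1
    exact Prod.ext h1 h2
end

section
/- For every n ∈ ℕ, there is a bijection between the family DP₂(n) of decomposition pairs and the set F(n) of triples (m, σ, j) where 1 ≤ m ≤ n, σ is an interval partition of {1,...,m}, and j = (j₁,...,j_{m-1}) is a tuple of non-negative integers summing to n - m. -/
open Finset


/-- `(P, η)` is a decomposition pair: `η = η' ∪ π''`, where every inner
(depth-2) block of `P` is a block of `η`, every other block of `η` refines some
outer block of `P`, the blocks of `η'` are linearly ordered (condition (i)), and
consecutive numbers lying in the same outer block of `P` lie in the same block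
of `η` (condition (ii)). -/
def IsDecompPair {n : ℕ} (P η : Finpartition (Finset.univ : Finset (Fin n))) : Prop :=
  (∀ p ∈ P.parts, blockDepth P p = 2 → p ∈ η.parts) ∧
  (∀ B ∈ η.parts, (B ∈ P.parts ∧ blockDepth P B = 2) ∨
      ∃ p ∈ P.parts, blockDepth P p = 1 ∧ B ⊆ p) ∧
  (∀ B ∈ η.parts, ∀ C ∈ η.parts,
      (∃ p ∈ P.parts, blockDepth P p = 1 ∧ B ⊆ p) →
      (∃ q ∈ P.parts, blockDepth P q = 1 ∧ C ⊆ q) →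
      B = C ∨ (∀ x ∈ B, ∀ y ∈ C, x < y) ∨ (∀ x ∈ B, ∀ y ∈ C, y < x)) ∧
  (∀ i j : Fin n, (i : ℕ) + 1 = (j : ℕ) →
      (∃ p ∈ P.parts, blockDepth P p = 1 ∧ i ∈ p ∧ j ∈ p) →
      ∃ B ∈ η.parts, i ∈ B ∧ j ∈ B)


namespace DP

variable {n : ℕ}

/-- The setoid induced by a labelling function. -/
def kerS (f : Fin n → ℕ) : Setoid (Fin n) :=
  ⟨fun a b => f a = f b, ⟨fun _ => rfl, Eq.symm, Eq.trans⟩⟩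

instance (f : Fin n → ℕ) : DecidableRel (kerS f).r := fun a b =>
  inferInstanceAs (Decidable (f a = f b))

/-- Fiber of a labelling function. -/
def fib (f : Fin n → ℕ) (v : ℕ) : Finset (Fin n) := univ.filter fun x => f x = v

lemma mem_fib {f : Fin n → ℕ} {v : ℕ} {x : Fin n} : x ∈ fib f v ↔ f x = v := by
  simp [fib]

/-- The finpartition induced by a labelling function. -/
def FP (f : Fin n → ℕ) : Finpartition (univ : Finset (Fin n)) :=
  Finpartition.ofSetoid (kerS f)

lemma part_FP (f : Fin n → ℕ) (a : Fin n) : (FP f).part a = fib f (f a) := by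
  ext b
  rw [FP, Finpartition.mem_part_ofSetoid_iff_rel, mem_fib]
  exact ⟨fun h => h.symm, fun h => h.symm⟩

lemma fib_mem_parts (f : Fin n → ℕ) (a : Fin n) : fib f (f a) ∈ (FP f).parts := by
  rw [← part_FP]; exact (FP f).part_mem.2 (mem_univ a)

lemma mem_parts_FP {f : Fin n → ℕ} {p : Finset (Fin n)} :
    p ∈ (FP f).parts ↔ ∃ a, p = fib f (f a) := by
  constructor
  · intro hp
    obtain ⟨a, -, ha⟩ := (FP f).part_surjOn hp
    exact ⟨a, by rw [← ha, part_FP]⟩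
  · rintro ⟨a, rfl⟩; exact fib_mem_parts f a

lemma mem_self_fib (f : Fin n → ℕ) (a : Fin n) : a ∈ fib f (f a) := mem_fib.2 rfl

lemma fib_eq_iff (f : Fin n → ℕ) (a b : Fin n) :
    fib f (f a) = fib f (f b) ↔ f a = f b := by
  constructor
  · intro h
    have := mem_self_fib f a
    rw [h, mem_fib] at this
    exact this
  · intro h; rw [h]

/-- If every part of `Q` is a part of `P` then the partitions agree. -/
lemma eq_of_parts_subset {P Q : Finpartition (univ : Finset (Fin n))}
    (h : Q.parts ⊆ P.parts) : Q = P := by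
  ext p
  refine ⟨fun hp => h hp, fun hp => ?_⟩
  obtain ⟨x, hx⟩ := P.nonempty_of_mem_parts hp
  have hq : Q.part x ∈ P.parts := h (Q.part_mem.2 (mem_univ x))
  have : Q.part x = p := P.eq_of_mem_parts hq hp (Q.mem_part (mem_univ x)) hx
  rw [← this]; exact Q.part_mem.2 (mem_univ x)


section Build

variable (n m' : ℕ) (J : ℕ → ℕ) (D : Finset ℕ)

/-- position of the `k`-th outer element -/
def Sf : ℕ → ℕ := fun k => k + ∑ i ∈ range k, J i

/-- number of cut points below `k` -/
def cnt (E : Finset ℕ) (k : ℕ) : ℕ := #(E.filter (· < k))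

/-- the index of the outer element at or before `x` -/
def kOf (x : ℕ) : ℕ := Nat.findGreatest (fun k => Sf J k ≤ x) m'

/-- the labelling function: outer positions get their block index w.r.t. cut
set `E`, inner positions get `m' + 1 +` the index of the gap. -/
def lab (E : Finset ℕ) : Fin n → ℕ := fun x =>
  if Sf J (kOf m' J x) = (x : ℕ) then cnt E (kOf m' J x) else (m' + 1) + kOf m' J x

variable {n m' J D}

@[simp] lemma Sf_zero : Sf J 0 = 0 := by simp [Sf]

lemma Sf_succ (k : ℕ) : Sf J (k + 1) = Sf J k + J k + 1 := by
  simp [Sf, sum_range_succ]; omega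

lemma Sf_strictMono : StrictMono (Sf J) := by
  apply strictMono_nat_of_lt_succ
  intro k; rw [Sf_succ]; omega

lemma Sf_le_iff {k l : ℕ} : Sf J k ≤ Sf J l ↔ k ≤ l := Sf_strictMono.le_iff_le

lemma Sf_lt_iff {k l : ℕ} : Sf J k < Sf J l ↔ k < l := Sf_strictMono.lt_iff_lt

lemma Sf_top (htot : m' + 1 + ∑ i ∈ range m', J i = n) : Sf J m' + 1 = n := by
  simp [Sf]; omega

lemma Sf_lt_n (htot : m' + 1 + ∑ i ∈ range m', J i = n) {k : ℕ} (hk : k ≤ m') :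
    Sf J k < n := by
  have h1 := Sf_top htot
  have := Sf_le_iff (J := J).2 hk
  omega

lemma kOf_le (x : ℕ) : kOf m' J x ≤ m' := Nat.findGreatest_le m'

lemma Sf_kOf_le (x : ℕ) : Sf J (kOf m' J x) ≤ x :=
  Nat.findGreatest_spec (P := fun k => Sf J k ≤ x) (Nat.zero_le m') (by simp)

lemma lt_Sf_kOf_succ {x : ℕ} (hx : x ≤ Sf J m') : x < Sf J (kOf m' J x + 1) := by
  rcases Nat.lt_or_ge (kOf m' J x) m' with h | h
  · by_contra hc
    have h2 : ¬ (Sf J (kOf m' J x + 1) ≤ x) :=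
      Nat.findGreatest_is_greatest (P := fun k => Sf J k ≤ x) (k := kOf m' J x + 1)
        (Nat.lt_succ_self _) (by omega)
    omega
  · have h2 : kOf m' J x = m' := le_antisymm (kOf_le x) h
    have h3 : Sf J m' < Sf J (m' + 1) := Sf_lt_iff.2 (Nat.lt_succ_self m')
    rw [h2]; omega

lemma le_Sf_add_J {x : ℕ} (hx : x ≤ Sf J m') :
    x ≤ Sf J (kOf m' J x) + J (kOf m' J x) := by
  have h := lt_Sf_kOf_succ hx
  rw [Sf_succ] at h; omega

lemma kOf_eq {k x : ℕ} (hk : k ≤ m') (h1 : Sf J k ≤ x) (h2 : x ≤ Sf J k + J k) :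
    kOf m' J x = k := by
  have hge : k ≤ kOf m' J x := Nat.le_findGreatest hk h1
  rcases Nat.eq_or_lt_of_le hge with h | h
  · omega
  · exfalso
    have h3 := Sf_kOf_le (m' := m') (J := J) x
    have h4 : Sf J (k+1) ≤ Sf J (kOf m' J x) := Sf_le_iff.2 h
    rw [Sf_succ] at h4
    omega

lemma kOf_Sf {k : ℕ} (hk : k ≤ m') : kOf m' J (Sf J k) = k :=
  kOf_eq hk le_rfl (by omega)

/-! counting lemmas -/

lemma cnt_mono {E : Finset ℕ} {k l : ℕ} (h : k ≤ l) : cnt E k ≤ cnt E l := by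
  apply card_le_card
  intro a ha
  simp only [mem_filter] at ha ⊢
  exact ⟨ha.1, lt_of_lt_of_le ha.2 h⟩

lemma cnt_succ (E : Finset ℕ) (k : ℕ) :
    cnt E (k + 1) = cnt E k + (if k ∈ E then 1 else 0) := by
  classical
  have h : E.filter (· < k + 1) = E.filter (· < k) ∪ E.filter (· = k) := by
    ext a
    simp only [mem_filter, mem_union, ← and_or_left]
    exact and_congr_right fun _ => by omega
  rw [cnt, h, card_union_of_disjoint, filter_eq']
  · split <;> simp [cnt]
  · rw [Finset.disjoint_left]
    intro a ha ha'
    simp only [mem_filter] at ha ha'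
    omega

lemma cnt_sandwich {E : Finset ℕ} {k l r : ℕ} (h1 : k ≤ l) (h2 : l ≤ r)
    (h : cnt E k = cnt E r) : cnt E l = cnt E k :=
  le_antisymm (h ▸ cnt_mono h2) (cnt_mono h1)

lemma cnt_succ_eq_iff {E : Finset ℕ} {k : ℕ} : cnt E (k + 1) = cnt E k ↔ k ∉ E := by
  rw [cnt_succ]; split <;> simp_all

lemma cnt_eq_of_forall {E : Finset ℕ} {k l : ℕ} (h : k ≤ l)
    (hf : ∀ t, k ≤ t → t < l → t ∉ E) : cnt E l = cnt E k := by
  induction l with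
  | zero => simp [show k = 0 by omega]
  | succ l ih =>
    rcases Nat.eq_or_lt_of_le h with h' | h'
    · rw [h']
    · rw [cnt_succ, if_neg (hf l (by omega) (by omega))]
      rw [ih (by omega) (fun t h1 h2 => hf t h1 (by omega))]
      omega

lemma not_mem_of_cnt_eq {E : Finset ℕ} {k l t : ℕ} (hkl : k ≤ l)
    (h : cnt E l = cnt E k) (h1 : k ≤ t) (h2 : t < l) : t ∉ E := by
  rw [← cnt_succ_eq_iff (E := E) (k := t)]
  have e1 : cnt E t = cnt E k := cnt_sandwich h1 (by omega) h.symm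
  have e2 : cnt E (t+1) = cnt E k := cnt_sandwich (by omega) (by omega) h.symm
  omega

lemma cnt_eq_of_subset {E E' : Finset ℕ} (hsub : E' ⊆ E) {k l : ℕ} (hkl : k ≤ l)
    (h : cnt E l = cnt E k) : cnt E' l = cnt E' k :=
  cnt_eq_of_forall hkl (fun t h1 h2 hm => not_mem_of_cnt_eq hkl h h1 h2 (hsub hm))

lemma cnt_le {E : Finset ℕ} (hE : ∀ d ∈ E, d < m') (k : ℕ) : cnt E k ≤ m' := by
  calc cnt E k ≤ #E := card_le_card (filter_subset _ _)
  _ ≤ #(range m') := card_le_card (fun d hd => mem_range.2 (hE d hd))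
  _ = m' := card_range m'

end Build


section Build2
variable {n m' : ℕ} {J : ℕ → ℕ} {E : Finset ℕ}

/-- `x` is an outer position. -/
def isOut (m' : ℕ) (J : ℕ → ℕ) (x : Fin n) : Prop := Sf J (kOf m' J x) = (x : ℕ)

instance (m' : ℕ) (J : ℕ → ℕ) (x : Fin n) : Decidable (isOut m' J x) :=
  inferInstanceAs (Decidable (_ = _))

lemma fin_le_Sf_top (htot : m' + 1 + ∑ i ∈ range m', J i = n) (x : Fin n) :
    (x : ℕ) ≤ Sf J m' := by
  have h1 := Sf_top htot
  have h2 := x.isLt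
  omega

lemma lab_of_out {x : Fin n} (hx : isOut m' J x) :
    lab n m' J E x = cnt E (kOf m' J x) := if_pos hx

lemma lab_of_in {x : Fin n} (hx : ¬ isOut m' J x) :
    lab n m' J E x = (m' + 1) + kOf m' J x := if_neg hx

lemma inner_ka (hJ : ∀ i, m' ≤ i → J i = 0)
    (htot : m' + 1 + ∑ i ∈ range m', J i = n)
    {a : Fin n} (ha : ¬ isOut m' J a) : kOf m' J a < m' ∧ J (kOf m' J a) ≠ 0 := by
  have h1 := Sf_kOf_le (m' := m') (J := J) (a : ℕ)
  have h2 := le_Sf_add_J (m' := m') (fin_le_Sf_top htot a)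
  have h3 := kOf_le (m' := m') (J := J) (a : ℕ)
  have h4 : Sf J (kOf m' J a) ≠ (a : ℕ) := ha
  constructor
  · rcases Nat.lt_or_ge (kOf m' J a) m' with h | h
    · exact h
    · exfalso
      have : kOf m' J a = m' := by omega
      have := hJ (kOf m' J a) (by omega)
      omega
  · intro h0; rw [h0] at h2; omega

lemma mem_fib_in (hE : ∀ d ∈ E, d < m')
    (htot : m' + 1 + ∑ i ∈ range m', J i = n)
    {a x : Fin n} (ha : ¬ isOut m' J a) :
    x ∈ fib (lab n m' J E) (lab n m' J E a) ↔
      Sf J (kOf m' J a) < (x : ℕ) ∧ (x : ℕ) ≤ Sf J (kOf m' J a) + J (kOf m' J a) := by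
  rw [mem_fib, lab_of_in ha]
  constructor
  · intro hx
    by_cases hox : isOut m' J x
    · exfalso
      rw [lab_of_out hox] at hx
      have := cnt_le hE (kOf m' J x)
      omega
    · rw [lab_of_in hox] at hx
      have hk : kOf m' J x = kOf m' J a := by omega
      have h1 := Sf_kOf_le (m' := m') (J := J) (x : ℕ)
      have h2 := le_Sf_add_J (m' := m') (fin_le_Sf_top htot x)
      have h4 : Sf J (kOf m' J x) ≠ (x : ℕ) := hox
      rw [hk] at h1 h2 h4
      omega
  · rintro ⟨h1, h2⟩
    have hk : kOf m' J (x : ℕ) = kOf m' J a :=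
      kOf_eq (kOf_le _) (by omega) h2
    have hox : ¬ isOut m' J x := by
      intro hox
      have : Sf J (kOf m' J x) = (x : ℕ) := hox
      rw [hk] at this; omega
    rw [lab_of_in hox, hk]

lemma mem_fib_out (hE : ∀ d ∈ E, d < m')
    {a x : Fin n} (ha : isOut m' J a) :
    x ∈ fib (lab n m' J E) (lab n m' J E a) ↔
      ∃ k ≤ m', (x : ℕ) = Sf J k ∧ cnt E k = cnt E (kOf m' J a) := by
  rw [mem_fib, lab_of_out ha]
  constructor
  · intro hx
    by_cases hox : isOut m' J x
    · rw [lab_of_out hox] at hx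
      exact ⟨kOf m' J x, kOf_le _, hox.symm, hx⟩
    · exfalso
      rw [lab_of_in hox] at hx
      have := cnt_le hE (kOf m' J a)
      omega
  · rintro ⟨k, hk, hxk, hc⟩
    have h1 : kOf m' J (x : ℕ) = k := by rw [hxk]; exact kOf_Sf hk
    have hox : isOut m' J x := by
      show Sf J (kOf m' J x) = (x : ℕ); rw [h1, hxk]
    rw [lab_of_out hox, h1, hc]

/-- inner fibers do not depend on the cut set. -/
lemma fib_in_eq {E' : Finset ℕ} (hE : ∀ d ∈ E, d < m') (hE' : ∀ d ∈ E', d < m')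
    (htot : m' + 1 + ∑ i ∈ range m', J i = n)
    {a : Fin n} (ha : ¬ isOut m' J a) :
    fib (lab n m' J E) (lab n m' J E a) = fib (lab n m' J E') (lab n m' J E' a) := by
  ext x
  rw [mem_fib_in hE htot ha, mem_fib_in hE' htot ha]

end Build2
section Build3

variable {n m' : ℕ} {J : ℕ → ℕ} {E : Finset ℕ}

/-- Basic facts bundled. -/
structure Good (n m' : ℕ) (J : ℕ → ℕ) (E : Finset ℕ) : Prop where
  hE : ∀ d ∈ E, d < m'
  hJ : ∀ i, m' ≤ i → J i = 0
  htot : m' + 1 + ∑ i ∈ range m', J i = n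

lemma Good.le_top (h : Good n m' J E) {k : ℕ} (hk : k ≤ m') : Sf J k < n :=
  Sf_lt_n h.htot hk

lemma isOut_of_coe {x : Fin n} {k : ℕ} (hk : k ≤ m') (hx : (x : ℕ) = Sf J k) :
    isOut m' J x ∧ kOf m' J x = k := by
  have h1 : kOf m' J (x : ℕ) = k := by rw [hx]; exact kOf_Sf hk
  refine ⟨?_, h1⟩
  show Sf J (kOf m' J x) = (x : ℕ)
  rw [h1, hx]

lemma blockDepth_of_out (hG : Good n m' J E) {a : Fin n} (ha : isOut m' J a) :
    blockDepth (FP (lab n m' J E)) ((FP (lab n m' J E)).part a) = 1 := by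
  classical
  rw [blockDepth]
  convert Nat.zero_add 1
  rw [Finset.card_eq_zero, filter_eq_empty_iff]
  rintro q hq ⟨hp, -, hne, i, hi, j, hj, hspec⟩
  obtain ⟨b, rfl⟩ := mem_parts_FP.1 hq
  rw [part_FP] at hspec hne
  obtain ⟨h1, h2⟩ := hspec a (mem_self_fib _ a)
  rw [Fin.lt_def] at h1 h2
  by_cases hb : isOut m' J b
  · obtain ⟨ki, hki, hik, hci⟩ := (mem_fib_out hG.hE hb).1 hi
    obtain ⟨kj, hkj, hjk, hcj⟩ := (mem_fib_out hG.hE hb).1 hj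
    have hka : (a : ℕ) = Sf J (kOf m' J a) := ha.symm
    have l1 : ki < kOf m' J a := Sf_lt_iff (J := J).1 (by omega)
    have l2 : kOf m' J a < kj := Sf_lt_iff (J := J).1 (by omega)
    have l3 : cnt E ki = cnt E kj := by omega
    have l4 : cnt E (kOf m' J a) = cnt E ki :=
      cnt_sandwich (by omega) (by omega) l3
    apply hne
    apply congrArg
    rw [lab_of_out ha, lab_of_out hb]
    omega
  · obtain ⟨h3, h4⟩ := (mem_fib_in hG.hE hG.htot hb).1 hi
    obtain ⟨h5, h6⟩ := (mem_fib_in hG.hE hG.htot hb).1 hj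
    have hka : (a : ℕ) = Sf J (kOf m' J a) := ha.symm
    have hs := Sf_succ (J := J) (kOf m' J b)
    have l1 : kOf m' J b < kOf m' J a := Sf_lt_iff (J := J).1 (by omega)
    have l2 : kOf m' J a < kOf m' J b + 1 := Sf_lt_iff (J := J).1 (by omega)
    omega

open scoped Classical in
lemma depth2_filter (hG : Good n m' J E) (hE0 : ∀ d ∈ E, J d = 0)
    {a : Fin n} (ha : ¬ isOut m' J a) :
    ((FP (lab n m' J E)).parts.filter
        (fun q => InnerTo (FP (lab n m' J E)) ((FP (lab n m' J E)).part a) q)) =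
      {fib (lab n m' J E) (cnt E (kOf m' J a))} := by
  have hka := inner_ka hG.hJ hG.htot ha
  have h1 := Sf_kOf_le (m' := m') (J := J) (a : ℕ)
  have hs := Sf_succ (J := J) (kOf m' J a)
  have hwlt : Sf J (kOf m' J a) < n := hG.le_top (by omega)
  have hwlt' : Sf J (kOf m' J a + 1) < n := hG.le_top (by omega)
  set w : Fin n := ⟨Sf J (kOf m' J a), hwlt⟩ with hw
  set w' : Fin n := ⟨Sf J (kOf m' J a + 1), hwlt'⟩ with hw'
  have hkam : kOf m' J a ≤ m' := le_of_lt hka.1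
  have hkam' : kOf m' J a + 1 ≤ m' := hka.1
  have hwo := isOut_of_coe (J := J) (x := w) (k := kOf m' J a) hkam rfl
  have hwo' := isOut_of_coe (J := J) (x := w') (k := kOf m' J a + 1) hkam' rfl
  have hlabw : lab n m' J E w = cnt E (kOf m' J a) := by
    rw [lab_of_out hwo.1, hwo.2]
  have hcnt1 : cnt E (kOf m' J a + 1) = cnt E (kOf m' J a) := by
    rw [cnt_succ_eq_iff]
    intro hmem
    exact hka.2 (hE0 _ hmem)
  have hanotout : ∀ x : Fin n, Sf J (kOf m' J a) < (x : ℕ) →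
      (x : ℕ) ≤ Sf J (kOf m' J a) + J (kOf m' J a) →
      x ∈ fib (lab n m' J E) (lab n m' J E a) := by
    intro x hx1 hx2
    exact (mem_fib_in hG.hE hG.htot ha).2 ⟨hx1, hx2⟩
  ext q
  simp only [mem_filter, mem_singleton]
  constructor
  · rintro ⟨hq, -, -, hne, i, hi, j, hj, hspec⟩
    obtain ⟨b, rfl⟩ := mem_parts_FP.1 hq
    rw [part_FP] at hspec
    have hb1 : Sf J (kOf m' J a) + 1 < n := by omega
    have hb2 : Sf J (kOf m' J a) + J (kOf m' J a) < n := by omega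
    have hx1 : (⟨Sf J (kOf m' J a) + 1, hb1⟩ : Fin n) ∈
        fib (lab n m' J E) (lab n m' J E a) :=
      hanotout _ (by simp only [Fin.val_mk]; omega) (by simp only [Fin.val_mk]; omega)
    have hx2 : (⟨Sf J (kOf m' J a) + J (kOf m' J a), hb2⟩ : Fin n) ∈
        fib (lab n m' J E) (lab n m' J E a) :=
      hanotout _ (by simp only [Fin.val_mk]; omega) (by simp only [Fin.val_mk]; omega)
    obtain ⟨hi1, hi2⟩ := hspec _ hx1
    obtain ⟨hj1, hj2⟩ := hspec _ hx2
    rw [Fin.lt_def] at hi1 hj2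
    simp only at hi1 hj2
    by_cases hb : isOut m' J b
    · obtain ⟨ki, hki, hik, hci⟩ := (mem_fib_out hG.hE hb).1 hi
      obtain ⟨kj, hkj, hjk, hcj⟩ := (mem_fib_out hG.hE hb).1 hj
      have l1 : ki ≤ kOf m' J a := Sf_le_iff (J := J).1 (by omega)
      have l2 : kOf m' J a + 1 ≤ kj := Sf_le_iff (J := J).1 (by omega)
      have l3 : cnt E ki = cnt E kj := by omega
      have l4 : cnt E (kOf m' J a) = cnt E ki :=
        cnt_sandwich (by omega) (by omega) l3
      apply congrArg
      rw [lab_of_out hb]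
      omega
    · exfalso
      obtain ⟨h3, h4⟩ := (mem_fib_in hG.hE hG.htot hb).1 hi
      obtain ⟨h5, h6⟩ := (mem_fib_in hG.hE hG.htot hb).1 hj
      have hs' := Sf_succ (J := J) (kOf m' J b)
      have l1 : kOf m' J b < kOf m' J a := Sf_lt_iff (J := J).1 (by omega)
      have l2 : kOf m' J a + 1 < kOf m' J b + 1 := Sf_lt_iff (J := J).1 (by omega)
      omega
  · rintro rfl
    rw [← hlabw]
    refine ⟨fib_mem_parts _ _, (FP _).part_mem.2 (mem_univ a), fib_mem_parts _ _, ?_,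
      w, mem_self_fib _ _, w', ?_, ?_⟩
    · rw [part_FP]
      intro hcontra
      have : a ∈ fib (lab n m' J E) (lab n m' J E w) := hcontra ▸ mem_self_fib _ a
      obtain ⟨k, hk, hak, -⟩ := (mem_fib_out hG.hE hwo.1).1 this
      exact ha (isOut_of_coe hk hak).1
    · rw [mem_fib, lab_of_out hwo'.1, lab_of_out hwo.1, hwo.2, hwo'.2, hcnt1]
    · intro x hx
      rw [part_FP] at hx
      obtain ⟨hx1, hx2⟩ := (mem_fib_in hG.hE hG.htot ha).1 hx
      rw [Fin.lt_def, Fin.lt_def]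
      simp only [hw, hw']
      omega

lemma blockDepth_of_in (hG : Good n m' J E) (hE0 : ∀ d ∈ E, J d = 0)
    {a : Fin n} (ha : ¬ isOut m' J a) :
    blockDepth (FP (lab n m' J E)) ((FP (lab n m' J E)).part a) = 2 := by
  rw [blockDepth, depth2_filter hG hE0 ha, card_singleton]

end Build3

section Build4

variable {n m' : ℕ} {J : ℕ → ℕ} {E D : Finset ℕ}

lemma noncross (hG : Good n m' J E) : IsNoncrossing (FP (lab n m' J E)) := by
  rintro ⟨p, hp, q, hq, hne, i, j, k, l, hip, hjp, hkq, hlq, h1, h2, h3⟩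
  obtain ⟨a, rfl⟩ := mem_parts_FP.1 hp
  obtain ⟨b, rfl⟩ := mem_parts_FP.1 hq
  rw [Fin.lt_def] at h1 h2 h3
  by_cases hA : isOut m' J a
  · by_cases hB : isOut m' J b
    · obtain ⟨k1, hk1, e1, c1⟩ := (mem_fib_out hG.hE hA).1 hip
      obtain ⟨k2, hk2, e2, c2⟩ := (mem_fib_out hG.hE hA).1 hjp
      obtain ⟨k3, hk3, e3, c3⟩ := (mem_fib_out hG.hE hB).1 hkq
      have l1 : k1 < k3 := Sf_lt_iff (J := J).1 (by omega)
      have l2 : k3 < k2 := Sf_lt_iff (J := J).1 (by omega)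
      have l4 : cnt E k3 = cnt E k1 :=
        cnt_sandwich (le_of_lt l1) (le_of_lt l2) (c1.trans c2.symm)
      apply hne; apply congrArg
      rw [lab_of_out hA, lab_of_out hB]
      omega
    · obtain ⟨k2, hk2, e2, c2⟩ := (mem_fib_out hG.hE hA).1 hjp
      obtain ⟨h5, h6⟩ := (mem_fib_in hG.hE hG.htot hB).1 hkq
      obtain ⟨h7, h8⟩ := (mem_fib_in hG.hE hG.htot hB).1 hlq
      have hs := Sf_succ (J := J) (kOf m' J b)
      have l1 : kOf m' J b < k2 := Sf_lt_iff (J := J).1 (by omega)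
      have l2 : k2 < kOf m' J b + 1 := Sf_lt_iff (J := J).1 (by omega)
      omega
  · by_cases hB : isOut m' J b
    · obtain ⟨h5, h6⟩ := (mem_fib_in hG.hE hG.htot hA).1 hip
      obtain ⟨h7, h8⟩ := (mem_fib_in hG.hE hG.htot hA).1 hjp
      obtain ⟨k3, hk3, e3, c3⟩ := (mem_fib_out hG.hE hB).1 hkq
      have hs := Sf_succ (J := J) (kOf m' J a)
      have l1 : kOf m' J a < k3 := Sf_lt_iff (J := J).1 (by omega)
      have l2 : k3 < kOf m' J a + 1 := Sf_lt_iff (J := J).1 (by omega)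
      omega
    · obtain ⟨h5, h6⟩ := (mem_fib_in hG.hE hG.htot hA).1 hip
      obtain ⟨h7, h8⟩ := (mem_fib_in hG.hE hG.htot hA).1 hjp
      obtain ⟨h9, h10⟩ := (mem_fib_in hG.hE hG.htot hB).1 hkq
      have hsA := Sf_succ (J := J) (kOf m' J a)
      have hsB := Sf_succ (J := J) (kOf m' J b)
      have l1 : kOf m' J b < kOf m' J a + 1 := Sf_lt_iff (J := J).1 (by omega)
      have l2 : kOf m' J a < kOf m' J b + 1 := Sf_lt_iff (J := J).1 (by omega)
      apply hne; apply congrArg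
      rw [lab_of_in hA, lab_of_in hB]
      omega

lemma not_isOut_of_depth2 (hG : Good n m' J E) {a : Fin n}
    (h : blockDepth (FP (lab n m' J E)) (fib (lab n m' J E) (lab n m' J E a)) = 2) :
    ¬ isOut m' J a := by
  intro ha
  have h2 := blockDepth_of_out hG ha
  rw [part_FP] at h2
  omega

lemma not_adjacent (hG : Good n m' J E) (hE0 : ∀ d ∈ E, J d = 0) :
    ¬ ∃ p ∈ (FP (lab n m' J E)).parts, ∃ q ∈ (FP (lab n m' J E)).parts,
      blockDepth (FP (lab n m' J E)) p = 2 ∧ blockDepth (FP (lab n m' J E)) q = 2 ∧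
      ∃ x ∈ p, ∃ y ∈ q, (∀ a ∈ p, a ≤ x) ∧ (∀ b ∈ q, y ≤ b) ∧ (x : ℕ) + 1 = (y : ℕ) := by
  rintro ⟨p, hp, q, hq, hdp, hdq, x, hx, y, hy, hmax, hmin, hxy⟩
  obtain ⟨a, rfl⟩ := mem_parts_FP.1 hp
  obtain ⟨b, rfl⟩ := mem_parts_FP.1 hq
  have hA : ¬ isOut m' J a := not_isOut_of_depth2 hG hdp
  have hB : ¬ isOut m' J b := not_isOut_of_depth2 hG hdq
  have hkA := inner_ka hG.hJ hG.htot hA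
  have hkB := inner_ka hG.hJ hG.htot hB
  have hsA := Sf_succ (J := J) (kOf m' J a)
  have hsB := Sf_succ (J := J) (kOf m' J b)
  have htopA : Sf J (kOf m' J a + 1) < n := hG.le_top hkA.1
  have htopB : Sf J (kOf m' J b + 1) < n := hG.le_top hkB.1
  obtain ⟨hx1, hx2⟩ := (mem_fib_in hG.hE hG.htot hA).1 hx
  obtain ⟨hy1, hy2⟩ := (mem_fib_in hG.hE hG.htot hB).1 hy
  have htA : (⟨Sf J (kOf m' J a) + J (kOf m' J a), by omega⟩ : Fin n) ∈
      fib (lab n m' J E) (lab n m' J E a) :=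
    (mem_fib_in hG.hE hG.htot hA).2 (by constructor <;> · simp only [Fin.val_mk]; omega)
  have huB : (⟨Sf J (kOf m' J b) + 1, by omega⟩ : Fin n) ∈
      fib (lab n m' J E) (lab n m' J E b) :=
    (mem_fib_in hG.hE hG.htot hB).2 (by constructor <;> · simp only [Fin.val_mk]; omega)
  have e1 := hmax _ htA
  have e2 := hmin _ huB
  rw [Fin.le_def] at e1 e2
  simp only [Fin.val_mk] at e1 e2
  rcases le_or_gt (kOf m' J b) (kOf m' J a) with h | h
  · have := Sf_le_iff (J := J).2 h
    omega
  · have := Sf_le_iff (J := J) (k := kOf m' J (a : ℕ) + 1) (l := kOf m' J (b : ℕ)) |>.2 h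
    omega

lemma isOut_zero (hn : 0 < n) : isOut m' J (⟨0, hn⟩ : Fin n) := by
  have h := Sf_kOf_le (m' := m') (J := J) ((⟨0, hn⟩ : Fin n) : ℕ)
  simp only [Fin.val_mk] at h ⊢
  show Sf J (kOf m' J (((⟨0, hn⟩ : Fin n)) : ℕ)) = ((⟨0, hn⟩ : Fin n) : ℕ)
  simp only [Fin.val_mk] at *
  omega

lemma isD2_FP (hn : 0 < n) (hG : Good n m' J E) (hE0 : ∀ d ∈ E, J d = 0) :
    IsD2 (FP (lab n m' J E)) := by
  refine ⟨noncross hG, ?_, ?_, not_adjacent hG hE0⟩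
  · intro p hp
    obtain ⟨a, rfl⟩ := mem_parts_FP.1 hp
    rw [← part_FP]
    by_cases hA : isOut m' J a
    · rw [blockDepth_of_out hG hA]; omega
    · rw [blockDepth_of_in hG hE0 hA]
  · refine ⟨(FP (lab n m' J E)).part ⟨0, hn⟩, (FP _).part_mem.2 (mem_univ _), ?_⟩
    exact blockDepth_of_out hG (isOut_zero hn)

lemma decompPair_FP (hD : ∀ d ∈ D, d < m') (hJ : ∀ i, m' ≤ i → J i = 0)
    (htot : m' + 1 + ∑ i ∈ range m', J i = n)
    (hE : E = D.filter (fun i => J i = 0)) :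
    IsDecompPair (FP (lab n m' J E)) (FP (lab n m' J D)) := by
  have hsub : E ⊆ D := by rw [hE]; exact filter_subset _ _
  have hE0 : ∀ d ∈ E, J d = 0 := by
    intro d hd; rw [hE] at hd; exact (mem_filter.1 hd).2
  have hGE : Good n m' J E := ⟨fun d hd => hD d (hsub hd), hJ, htot⟩
  have hmemE : ∀ d, d ∈ D → J d = 0 → d ∈ E := by
    intro d h1 h2; rw [hE, mem_filter]; exact ⟨h1, h2⟩
  refine ⟨?_, ?_, ?_, ?_⟩
  · -- inner blocks of P are blocks of η
    intro p hp hd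
    obtain ⟨a, rfl⟩ := mem_parts_FP.1 hp
    have hA : ¬ isOut m' J a := not_isOut_of_depth2 hGE hd
    rw [fib_in_eq hGE.hE hD htot hA]
    exact fib_mem_parts _ _
  · -- blocks of η
    intro B hB
    obtain ⟨b, rfl⟩ := mem_parts_FP.1 hB
    by_cases hb : isOut m' J b
    · refine Or.inr ⟨fib (lab n m' J E) (lab n m' J E b), fib_mem_parts _ _, ?_, ?_⟩
      · rw [← part_FP]
        exact blockDepth_of_out hGE hb
      · intro x hx
        obtain ⟨k, hk, hxk, hc⟩ := (mem_fib_out hD hb).1 hx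
        refine (mem_fib_out hGE.hE hb).2 ⟨k, hk, hxk, ?_⟩
        rcases le_total k (kOf m' J (b : ℕ)) with h | h
        · exact (cnt_eq_of_subset hsub h hc.symm).symm
        · exact cnt_eq_of_subset hsub h hc
    · refine Or.inl ⟨?_, ?_⟩
      · rw [← fib_in_eq hGE.hE hD htot hb]
        exact fib_mem_parts _ _
      · rw [← fib_in_eq hGE.hE hD htot hb, ← part_FP]
        exact blockDepth_of_in hGE hE0 hb
  · -- linear order on the outer η blocks
    intro B hB C hC hBp hCq
    obtain ⟨b, rfl⟩ := mem_parts_FP.1 hB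
    obtain ⟨c, rfl⟩ := mem_parts_FP.1 hC
    obtain ⟨p, hp, hdp, hsubB⟩ := hBp
    obtain ⟨q, hq, hdq, hsubC⟩ := hCq
    obtain ⟨a1, rfl⟩ := mem_parts_FP.1 hp
    obtain ⟨a2, rfl⟩ := mem_parts_FP.1 hq
    have ha1 : isOut m' J a1 := by
      by_contra h
      rw [← part_FP] at hdp
      rw [blockDepth_of_in hGE hE0 h] at hdp
      omega
    have ha2 : isOut m' J a2 := by
      by_contra h
      rw [← part_FP] at hdq
      rw [blockDepth_of_in hGE hE0 h] at hdq
      omega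
    obtain ⟨kb, hkb, hbk, -⟩ := (mem_fib_out hGE.hE ha1).1 (hsubB (mem_self_fib _ b))
    obtain ⟨kc, hkc, hck, -⟩ := (mem_fib_out hGE.hE ha2).1 (hsubC (mem_self_fib _ c))
    have hb : isOut m' J b := (isOut_of_coe hkb hbk).1
    have hc : isOut m' J c := (isOut_of_coe hkc hck).1
    by_cases heq : lab n m' J D b = lab n m' J D c
    · exact Or.inl (congrArg _ heq)
    · rw [lab_of_out hb, lab_of_out hc] at heq
      rcases Nat.lt_or_ge (cnt D (kOf m' J (b : ℕ))) (cnt D (kOf m' J (c : ℕ))) with h | h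
      · refine Or.inr (Or.inl ?_)
        intro x hx y hy
        obtain ⟨k, hk, hxk, hcx⟩ := (mem_fib_out hD hb).1 hx
        obtain ⟨k', hk', hyk, hcy⟩ := (mem_fib_out hD hc).1 hy
        rw [Fin.lt_def, hxk, hyk]
        refine Sf_lt_iff (J := J).2 ?_
        by_contra hcon
        have := cnt_mono (E := D) (Nat.le_of_not_lt hcon)
        omega
      · refine Or.inr (Or.inr ?_)
        intro x hx y hy
        obtain ⟨k, hk, hxk, hcx⟩ := (mem_fib_out hD hb).1 hx
        obtain ⟨k', hk', hyk, hcy⟩ := (mem_fib_out hD hc).1 hy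
        rw [Fin.lt_def, hxk, hyk]
        refine Sf_lt_iff (J := J).2 ?_
        by_contra hcon
        have := cnt_mono (E := D) (Nat.le_of_not_lt hcon)
        omega
  · -- consecutive elements of an outer block lie in one η block
    rintro i j hij ⟨p, hp, hdp, hi, hj⟩
    obtain ⟨a, rfl⟩ := mem_parts_FP.1 hp
    have ha : isOut m' J a := by
      by_contra h
      rw [← part_FP, blockDepth_of_in hGE hE0 h] at hdp
      omega
    obtain ⟨k, hk, hik, hc⟩ := (mem_fib_out hGE.hE ha).1 hi
    obtain ⟨l, hl, hjl, hc'⟩ := (mem_fib_out hGE.hE ha).1 hj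
    have hs := Sf_succ (J := J) k
    have hlk : k < l := Sf_lt_iff (J := J).1 (by omega)
    have h2 : Sf J (k+1) ≤ Sf J l := Sf_le_iff (J := J).2 hlk
    have hJk : J k = 0 := by omega
    have hlk1 : l = k + 1 := Sf_strictMono.injective (by omega : Sf J l = Sf J (k+1))
    have hkE : k ∉ E := by
      rw [← cnt_succ_eq_iff (E := E) (k := k), ← hlk1]
      omega
    have hkD : k ∉ D := fun hmem => hkE (hmemE k hmem hJk)
    have hcD : cnt D (k+1) = cnt D k := cnt_succ_eq_iff.2 hkD
    have hIi : isOut m' J i ∧ kOf m' J (i : ℕ) = k := isOut_of_coe hk hik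
    have hIj : isOut m' J j ∧ kOf m' J (j : ℕ) = l := isOut_of_coe hl hjl
    refine ⟨fib (lab n m' J D) (lab n m' J D i), fib_mem_parts _ _, mem_self_fib _ _, ?_⟩
    rw [mem_fib, lab_of_out hIj.1, lab_of_out hIi.1, hIi.2, hIj.2, hlk1, hcD]

end Build4

section Struct

variable {n : ℕ} {P η : Finpartition (univ : Finset (Fin n))}

/-- `x` lies in an outer (depth-one) block. -/
def OutP (P : Finpartition (univ : Finset (Fin n))) (x : Fin n) : Prop :=
  blockDepth P (P.part x) = 1

lemma depth_two_of_not_out (hP : IsD2 P) {x : Fin n} (hx : ¬ OutP P x) :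
    blockDepth P (P.part x) = 2 := by
  have h1 := hP.2.1 (P.part x) (P.part_mem.2 (mem_univ x))
  have h2 : blockDepth P (P.part x) ≠ 1 := hx
  rw [blockDepth] at *
  omega

open scoped Classical in
lemma filter_card_one_of_not_out (hP : IsD2 P) {x : Fin n} (hx : ¬ OutP P x) :
    (P.parts.filter fun q => InnerTo P (P.part x) q).card = 1 := by
  have := depth_two_of_not_out hP hx
  rw [blockDepth] at this
  omega

lemma unique_outer (hP : IsD2 P) {x : Fin n} (hx : ¬ OutP P x) {q r : Finset (Fin n)}
    (hq : InnerTo P (P.part x) q) (hr : InnerTo P (P.part x) r) : q = r := by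
  classical
  have hcard := filter_card_one_of_not_out hP hx
  have h1 : q ∈ P.parts.filter (fun q => InnerTo P (P.part x) q) :=
    mem_filter.2 ⟨hq.2.1, hq⟩
  have h2 : r ∈ P.parts.filter (fun q => InnerTo P (P.part x) q) :=
    mem_filter.2 ⟨hr.2.1, hr⟩
  exact Finset.card_le_one.1 (le_of_eq hcard) _ h1 _ h2

lemma not_out_of_innerTo (hP : IsD2 P) {x : Fin n} {q : Finset (Fin n)}
    (h : InnerTo P (P.part x) q) : ¬ OutP P x := by
  classical
  intro hout
  have h1 : q ∈ P.parts.filter (fun r => InnerTo P (P.part x) r) :=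
    mem_filter.2 ⟨h.2.1, h⟩
  have h2 : (P.parts.filter fun r => InnerTo P (P.part x) r).Nonempty := ⟨q, h1⟩
  have h3 := Finset.card_pos.2 h2
  have h4 : blockDepth P (P.part x) = 1 := hout
  rw [blockDepth] at h4
  omega

/-- every inner block is inner to a unique block, which moreover is outer. -/
lemma inner_struct (hP : IsD2 P) {x : Fin n} (hx : ¬ OutP P x) :
    ∃ q ∈ P.parts, blockDepth P q = 1 ∧ InnerTo P (P.part x) q := by
  classical
  have hcard := filter_card_one_of_not_out hP hx
  have hpos : 0 < #(P.parts.filter fun q => InnerTo P (P.part x) q) := by omega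
  obtain ⟨q, hq⟩ := Finset.card_pos.1 hpos
  rw [mem_filter] at hq
  obtain ⟨hqp, hqi⟩ := hq
  refine ⟨q, hqp, ?_, hqi⟩
  rcases Nat.lt_or_ge (blockDepth P q) 2 with h | h
  · have : 0 < blockDepth P q := by rw [blockDepth]; omega
    omega
  · exfalso
    have hq2 : blockDepth P q = 2 := le_antisymm (hP.2.1 q hqp) h
    have h0 : (P.parts.filter fun r => InnerTo P q r).card = 1 := by
      rw [blockDepth] at hq2; omega
    have hpos0 : 0 < #(P.parts.filter fun r => InnerTo P q r) := by omega
    obtain ⟨r, hr⟩ := Finset.card_pos.1 hpos0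
    rw [mem_filter] at hr
    obtain ⟨hrp, hri⟩ := hr
    obtain ⟨-, -, hqr, i', hi', j', hj', hspec'⟩ := hri
    have hqi2 := hqi
    obtain ⟨hp1, -, hpq, i, hi, j, hj, hspec⟩ := hqi2
    have hpr : InnerTo P (P.part x) r := by
      refine ⟨hp1, hrp, ?_, i', hi', j', hj', ?_⟩
      · intro hcon
        have hi'p : i' ∈ P.part x := by rw [hcon]; exact hi'
        have e1 := hspec i' hi'p
        have e2 := hspec' i hi
        exact absurd e1.1 (not_lt.2 (le_of_lt e2.1))
      · intro k hk
        obtain ⟨l1, l2⟩ := hspec k hk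
        obtain ⟨l3, -⟩ := hspec' i hi
        obtain ⟨-, l4⟩ := hspec' j hj
        exact ⟨lt_trans l3 l1, lt_trans l2 l4⟩
    exact hqr (unique_outer hP hx hqi hpr)

lemma zero_out (hP : IsD2 P) (hn : 0 < n) : OutP P (⟨0, hn⟩ : Fin n) := by
  by_contra hx
  obtain ⟨q, -, -, ⟨-, -, -, i, hi, j, hj, hspec⟩⟩ := inner_struct hP hx
  have h := (hspec _ (P.mem_part (mem_univ _))).1
  rw [Fin.lt_def] at h
  simp at h

lemma last_out (hP : IsD2 P) (hn : 0 < n) : OutP P (⟨n - 1, by omega⟩ : Fin n) := by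
  by_contra hx
  obtain ⟨q, -, -, ⟨-, -, -, i, hi, j, hj, hspec⟩⟩ := inner_struct hP hx
  have h := (hspec _ (P.mem_part (mem_univ _))).2
  rw [Fin.lt_def] at h
  have := j.isLt
  simp at h
  omega

/-- if `u` lies strictly between two elements of a block `B` not containing it,
then the block of `u` is inner to `B`. -/
lemma between_inner (hP : IsD2 P) {B : Finset (Fin n)} (hB : B ∈ P.parts)
    {w y u : Fin n} (hw : w ∈ B) (hy : y ∈ B) (h1 : w < u) (h2 : u < y)
    (hu : u ∉ B) : InnerTo P (P.part u) B := by
  have hne : P.part u ≠ B := fun hcon => hu (hcon ▸ P.mem_part (mem_univ u))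
  refine ⟨P.part_mem.2 (mem_univ u), hB, hne, w, hw, y, hy, ?_⟩
  intro k hk
  constructor
  · by_contra hcon
    push_neg at hcon
    have hkw : k ≠ w := by
      intro hcon2
      exact hne (P.eq_of_mem_parts (P.part_mem.2 (mem_univ u)) hB (hcon2 ▸ hk) hw)
    have hklt : k < w := lt_of_le_of_ne hcon hkw
    exact hP.1 ⟨P.part u, P.part_mem.2 (mem_univ u), B, hB, hne,
      k, u, w, y, hk, P.mem_part (mem_univ u), hw, hy, hklt, h1, h2⟩
  · by_contra hcon
    push_neg at hcon
    have hky : k ≠ y := by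
      intro hcon2
      exact hne (P.eq_of_mem_parts (P.part_mem.2 (mem_univ u)) hB (hcon2 ▸ hk) hy)
    have hkgt : y < k := lt_of_le_of_ne hcon (Ne.symm hky)
    exact hP.1 ⟨B, hB, P.part u, P.part_mem.2 (mem_univ u), Ne.symm hne,
      w, y, u, k, hw, hy, P.mem_part (mem_univ u), hk, h1, h2, hkgt⟩

/-- an outer element strictly between two elements of a block lies in the block -/
lemma out_between_mem (hP : IsD2 P) {B : Finset (Fin n)} (hB : B ∈ P.parts)
    {w y u : Fin n} (hw : w ∈ B) (hy : y ∈ B) (h1 : w < u) (h2 : u < y)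
    (hout : OutP P u) : u ∈ B := by
  by_contra hu
  exact not_out_of_innerTo hP (between_inner hP hB hw hy h1 h2 hu) hout

/-- no outer element lies strictly between two elements of an inner block. -/
lemma inner_block_no_out_between (hP : IsD2 P) {x : Fin n} (hx : ¬ OutP P x)
    {w y u : Fin n} (hw : w ∈ P.part x) (hy : y ∈ P.part x)
    (h1 : w < u) (h2 : u < y) : ¬ OutP P u := by
  intro hout
  have := out_between_mem hP (P.part_mem.2 (mem_univ x)) hw hy h1 h2 hout
  have heq : P.part u = P.part x := P.part_eq_of_mem (P.part_mem.2 (mem_univ x)) this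
  rw [OutP, heq] at hout
  exact hx hout

/-- adjacent inner elements lie in the same block. -/
lemma adjacent_inner_same (hP : IsD2 P) {y z : Fin n} (hyz : (y : ℕ) + 1 = (z : ℕ))
    (hy : ¬ OutP P y) (hz : ¬ OutP P z) : P.part y = P.part z := by
  by_contra hne
  -- y is the max of its block
  have hmax : ∀ w ∈ P.part y, w ≤ y := by
    intro w hw
    by_contra hcon
    push_neg at hcon
    have hwz : z < w := by
      rcases lt_trichotomy w z with h | h | h
      · exfalso; rw [Fin.lt_def] at hcon h; omega
      · exact ((hne (P.part_eq_of_mem (P.part_mem.2 (mem_univ y)) (h ▸ hw)).symm)).elim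
      · exact h
    have hyz' : y < z := by rw [Fin.lt_def]; omega
    have hinner : InnerTo P (P.part z) (P.part y) :=
      between_inner hP (P.part_mem.2 (mem_univ y)) (P.mem_part (mem_univ y)) hw hyz' hwz
        (fun hcon2 => hne (P.part_eq_of_mem (P.part_mem.2 (mem_univ y)) hcon2).symm)
    obtain ⟨q, hq, hq1, hqi⟩ := inner_struct hP hz
    have heq := unique_outer hP hz hqi hinner
    rw [heq] at hq1
    have h2 := depth_two_of_not_out hP hy
    omega
  have hmin : ∀ w ∈ P.part z, z ≤ w := by
    intro w hw
    by_contra hcon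
    push_neg at hcon
    have hwy : w < y := by
      rcases lt_trichotomy w y with h | h | h
      · exact h
      · exact ((hne (P.part_eq_of_mem (P.part_mem.2 (mem_univ z)) (h ▸ hw)))).elim
      · exfalso; rw [Fin.lt_def] at hcon h; omega
    have hyz' : y < z := by rw [Fin.lt_def]; omega
    have hinner : InnerTo P (P.part y) (P.part z) :=
      between_inner hP (P.part_mem.2 (mem_univ z)) hw (P.mem_part (mem_univ z)) hwy hyz'
        (fun hcon2 => hne (P.part_eq_of_mem (P.part_mem.2 (mem_univ z)) hcon2))
    obtain ⟨q, hq, hq1, hqi⟩ := inner_struct hP hy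
    have heq := unique_outer hP hy hqi hinner
    rw [heq] at hq1
    have h2 := depth_two_of_not_out hP hz
    omega
  exact hP.2.2.2 ⟨P.part y, P.part_mem.2 (mem_univ y), P.part z, P.part_mem.2 (mem_univ z),
    depth_two_of_not_out hP hy, depth_two_of_not_out hP hz,
    y, P.mem_part (mem_univ y), z, P.mem_part (mem_univ z), hmax, hmin, hyz⟩

end Struct

section Struct2

variable {n : ℕ} {P η : Finpartition (univ : Finset (Fin n))}

lemma out_mem_part {x y : Fin n} (hx : OutP P x) (hy : y ∈ P.part x) : OutP P y := by
  have : P.part y = P.part x := P.part_eq_of_mem (P.part_mem.2 (mem_univ x)) hy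
  rw [OutP, this]; exact hx

lemma gap_same (hP : IsD2 P) {u v : Fin n}
    (hbet : ∀ z : Fin n, (u : ℕ) < (z : ℕ) → (z : ℕ) < (v : ℕ) → ¬ OutP P z) :
    ∀ z w : Fin n, (u : ℕ) < (z : ℕ) → (z : ℕ) < (v : ℕ) → (u : ℕ) < (w : ℕ) →
      (w : ℕ) < (v : ℕ) → ((z : ℕ) ≤ (w : ℕ)) → P.part z = P.part w := by
  suffices aux : ∀ d : ℕ, ∀ z w : Fin n, (u : ℕ) < (z : ℕ) → (w : ℕ) < (v : ℕ) →
      (z : ℕ) + d = (w : ℕ) → P.part z = P.part w by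
    intro z w h1 h2 h3 h4 h5
    exact aux ((w : ℕ) - (z : ℕ)) z w h1 h4 (by omega)
  intro d
  induction d with
  | zero =>
    intro z w h1 h2 h3
    have : z = w := Fin.ext (by omega)
    rw [this]
  | succ d ih =>
    intro z w h1 h2 h3
    have hyb : (z : ℕ) + d < n := by have := w.isLt; omega
    set y : Fin n := ⟨(z : ℕ) + d, hyb⟩ with hy
    have e1 : P.part z = P.part y := ih z y h1 (by simp [hy]; omega) (by simp [hy])
    have e2 : P.part y = P.part w :=
      adjacent_inner_same hP (by simp [hy]; omega)
        (hbet y (by simp [hy]; omega) (by simp [hy]; omega))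
        (hbet w (by omega) h2)
    rw [e1, e2]

lemma gap_part_eq (hP : IsD2 P) {u v : Fin n} (hu : OutP P u) (hv : OutP P v)
    (hbet : ∀ z : Fin n, (u : ℕ) < (z : ℕ) → (z : ℕ) < (v : ℕ) → ¬ OutP P z)
    (hgap : (u : ℕ) + 1 < (v : ℕ)) :
    P.part (⟨(u : ℕ) + 1, by have := v.isLt; omega⟩ : Fin n) =
      univ.filter (fun z : Fin n => (u : ℕ) < (z : ℕ) ∧ (z : ℕ) < (v : ℕ)) := by
  have hvn := v.isLt
  set x0 : Fin n := ⟨(u : ℕ) + 1, by omega⟩ with hx0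
  have hx0in : ¬ OutP P x0 := hbet x0 (by simp [hx0]) (by simp [hx0]; omega)
  ext w
  simp only [mem_filter, mem_univ, true_and]
  constructor
  · intro hw
    constructor
    · by_contra hcon
      push_neg at hcon
      have hne : (w : ℕ) ≠ (u : ℕ) := by
        intro hcon2
        have : w = u := Fin.ext hcon2
        rw [this] at hw
        have e := P.part_eq_of_mem (P.part_mem.2 (mem_univ x0)) hw
        have : OutP P x0 := by rw [OutP, ← e]; exact hu
        exact hx0in this
      have hwu : w < u := by rw [Fin.lt_def]; omega
      have huz : u < x0 := by rw [Fin.lt_def]; simp [hx0]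
      exact (inner_block_no_out_between hP hx0in hw (P.mem_part (mem_univ x0)) hwu huz) hu
    · by_contra hcon
      push_neg at hcon
      have hne : (w : ℕ) ≠ (v : ℕ) := by
        intro hcon2
        have : w = v := Fin.ext hcon2
        rw [this] at hw
        have e := P.part_eq_of_mem (P.part_mem.2 (mem_univ x0)) hw
        have : OutP P x0 := by rw [OutP, ← e]; exact hv
        exact hx0in this
      have hvw : v < w := by rw [Fin.lt_def]; omega
      have hzv : x0 < v := by rw [Fin.lt_def]; simp [hx0]; omega
      exact (inner_block_no_out_between hP hx0in (P.mem_part (mem_univ x0)) hw hzv hvw) hv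
  · intro ⟨h1, h2⟩
    have := gap_same hP hbet x0 w (by simp [hx0]) (by simp [hx0]; omega) h1 h2
    rcases le_total ((x0 : ℕ)) ((w : ℕ)) with h | h
    · rw [(gap_same hP hbet x0 w (by simp [hx0]) (by simp [hx0]; omega) h1 h2 h)]
      exact P.mem_part (mem_univ w)
    · rw [← (gap_same hP hbet w x0 h1 h2 (by simp [hx0]) (by simp [hx0]; omega) h)]
      exact P.mem_part (mem_univ w)

lemma consec_out_same_of_gap (hP : IsD2 P) {u v : Fin n} (hu : OutP P u) (hv : OutP P v)
    (hbet : ∀ z : Fin n, (u : ℕ) < (z : ℕ) → (z : ℕ) < (v : ℕ) → ¬ OutP P z)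
    (hgap : (u : ℕ) + 1 < (v : ℕ)) : P.part u = P.part v := by
  have hvn := v.isLt
  set x0 : Fin n := ⟨(u : ℕ) + 1, by omega⟩ with hx0
  have hx0in : ¬ OutP P x0 := hbet x0 (by simp [hx0]) (by simp [hx0]; omega)
  obtain ⟨q, hq, hq1, hqi⟩ := inner_struct hP hx0in
  obtain ⟨-, -, -, i, hi, j, hj, hspec⟩ := hqi
  obtain ⟨l1, l2⟩ := hspec x0 (P.mem_part (mem_univ x0))
  rw [Fin.lt_def] at l1 l2
  simp only [hx0, Fin.val_mk] at l1 l2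
  -- u ∈ q
  have hu_mem : u ∈ q := by
    rcases eq_or_lt_of_le (show (i : ℕ) ≤ (u : ℕ) by omega) with h | h
    · have : i = u := Fin.ext h
      rw [← this]; exact hi
    · exact out_between_mem hP hq hi hj (by rw [Fin.lt_def]; omega)
        (by rw [Fin.lt_def]; omega) hu
  -- v ∈ q
  have hv1 : ((⟨(v : ℕ) - 1, by omega⟩ : Fin n)) ∈ P.part x0 := by
    rw [gap_part_eq hP hu hv hbet hgap]
    simp only [mem_filter, mem_univ, true_and, Fin.val_mk]
    omega
  obtain ⟨l3, l4⟩ := hspec _ hv1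
  rw [Fin.lt_def] at l3 l4
  simp only [Fin.val_mk] at l3 l4
  have hv_mem : v ∈ q := by
    rcases eq_or_lt_of_le (show (v : ℕ) ≤ (j : ℕ) by omega) with h | h
    · have : v = j := Fin.ext h
      rw [this]; exact hj
    · exact out_between_mem hP hq hi hj (by rw [Fin.lt_def]; omega)
        (by rw [Fin.lt_def]; omega) hv
  rw [P.part_eq_of_mem hq hu_mem, P.part_eq_of_mem hq hv_mem]

lemma eta_sub_outer (hP : IsD2 P) (hPη : IsDecompPair P η) {x : Fin n}
    (hx : OutP P x) : ∃ p ∈ P.parts, blockDepth P p = 1 ∧ η.part x ⊆ p := by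
  rcases hPη.2.1 (η.part x) (η.part_mem.2 (mem_univ x)) with ⟨h1, h2⟩ | ⟨p, hp, h1, h2⟩
  · exfalso
    have : P.part x = η.part x := P.part_eq_of_mem h1 (η.mem_part (mem_univ x))
    rw [OutP, this, h2] at hx
    omega
  · exact ⟨p, hp, h1, h2⟩

lemma out_mem_eta (hP : IsD2 P) (hPη : IsDecompPair P η) {x y : Fin n}
    (hx : OutP P x) (hy : y ∈ η.part x) : OutP P y := by
  obtain ⟨p, hp, h1, h2⟩ := eta_sub_outer hP hPη hx
  have : P.part y = p := P.part_eq_of_mem hp (h2 hy)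
  rw [OutP, this]; exact h1

lemma adj_out_iff (hP : IsD2 P) (hPη : IsDecompPair P η) {u v : Fin n}
    (hu : OutP P u) (hadj : (u : ℕ) + 1 = (v : ℕ)) :
    (P.part u = P.part v ↔ η.part u = η.part v) := by
  constructor
  · intro h
    obtain ⟨B, hB, h1, h2⟩ := hPη.2.2.2 u v hadj
      ⟨P.part u, P.part_mem.2 (mem_univ u), hu, P.mem_part (mem_univ u),
        h ▸ P.mem_part (mem_univ v)⟩
    rw [η.part_eq_of_mem hB h1, η.part_eq_of_mem hB h2]
  · intro h
    obtain ⟨p, hp, h1, h2⟩ := eta_sub_outer hP hPη hu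
    have huv : v ∈ η.part u := h ▸ η.mem_part (mem_univ v)
    have e1 : P.part u = p := P.part_eq_of_mem hp (h2 (η.mem_part (mem_univ u)))
    have e2 : P.part v = p := P.part_eq_of_mem hp (h2 huv)
    rw [e1, e2]

lemma part_interval (hP : IsD2 P) {u v w : Fin n} (hv : OutP P v)
    (h1 : u < v) (h2 : v < w) (heq : P.part u = P.part w) :
    P.part v = P.part u := by
  have hw : w ∈ P.part u := heq ▸ P.mem_part (mem_univ w)
  exact P.part_eq_of_mem (P.part_mem.2 (mem_univ u))
    (out_between_mem hP (P.part_mem.2 (mem_univ u)) (P.mem_part (mem_univ u)) hw h1 h2 hv)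

lemma eta_interval (hP : IsD2 P) (hPη : IsDecompPair P η) {u v w : Fin n}
    (hu : OutP P u) (hv : OutP P v) (hw : OutP P w)
    (h1 : u < v) (h2 : v < w) (heq : η.part u = η.part w) :
    η.part v = η.part u := by
  obtain ⟨p, hp, hp1, hpsub⟩ := eta_sub_outer hP hPη hu
  obtain ⟨q, hq, hq1, hqsub⟩ := eta_sub_outer hP hPη hv
  rcases hPη.2.2.1 (η.part u) (η.part_mem.2 (mem_univ u)) (η.part v) (η.part_mem.2 (mem_univ v))
      ⟨p, hp, hp1, hpsub⟩ ⟨q, hq, hq1, hqsub⟩ with h | h | h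
  · exact h.symm
  · exfalso
    have := h w (heq ▸ η.mem_part (mem_univ w)) v (η.mem_part (mem_univ v))
    exact absurd h2 (not_lt.2 (le_of_lt this))
  · exfalso
    have := h u (η.mem_part (mem_univ u)) v (η.mem_part (mem_univ v))
    exact absurd h1 (not_lt.2 (le_of_lt this))

end Struct2

section Extract

variable {n : ℕ} (P η : Finpartition (univ : Finset (Fin n)))

noncomputable instance : DecidablePred (OutP P) :=
  fun x => inferInstanceAs (Decidable (blockDepth P (P.part x) = 1))

/-- The set of outer elements. -/
noncomputable def OutF : Finset (Fin n) := univ.filter (fun x => OutP P x)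

/-- The number of outer elements. -/
noncomputable def mE : ℕ := #(OutF P)

/-- Enumeration of the outer elements. -/
noncomputable def eN (hm : 0 < mE P) (k : ℕ) : Fin n :=
  (OutF P).orderEmbOfFin (k := mE P) rfl ⟨min k (mE P - 1), by omega⟩

variable {P η}

lemma mem_OutF {x : Fin n} : x ∈ OutF P ↔ OutP P x := by simp [OutF]

lemma mE_pos (hP : IsD2 P) (hn : 0 < n) : 0 < mE P :=
  Finset.card_pos.2 ⟨⟨0, hn⟩, mem_OutF.2 (zero_out hP hn)⟩

lemma mE_le (hP : IsD2 P) : mE P ≤ n := by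
  rw [mE]
  calc #(OutF P) ≤ #(univ : Finset (Fin n)) := card_le_card (filter_subset _ _)
  _ = n := by simp

lemma eN_mem (hm : 0 < mE P) (k : ℕ) : eN P hm k ∈ OutF P :=
  Finset.orderEmbOfFin_mem _ _ _

lemma eN_out (hm : 0 < mE P) (k : ℕ) : OutP P (eN P hm k) :=
  mem_OutF.1 (eN_mem hm k)

lemma eN_lt_iff (hm : 0 < mE P) {k l : ℕ} (hk : k ≤ mE P - 1) (hl : l ≤ mE P - 1) :
    eN P hm k < eN P hm l ↔ k < l := by
  rw [eN, eN]
  constructor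
  · intro h
    have h2 := (OrderEmbedding.lt_iff_lt _).1 h
    simp only [Fin.mk_lt_mk] at h2
    omega
  · intro h
    apply (OrderEmbedding.lt_iff_lt _).2
    simp only [Fin.mk_lt_mk]
    omega

lemma eN_inj (hm : 0 < mE P) {k l : ℕ} (hk : k ≤ mE P - 1) (hl : l ≤ mE P - 1)
    (h : eN P hm k = eN P hm l) : k = l := by
  by_contra hne
  rcases Nat.lt_or_ge k l with h2 | h2
  · have h3 := (eN_lt_iff hm hk hl).2 h2
    rw [h] at h3
    exact lt_irrefl _ h3
  · have h3 : l < k := by omega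
    have h4 := (eN_lt_iff hm hl hk).2 h3
    rw [h] at h4
    exact lt_irrefl _ h4

lemma mem_OutF_iff_eN (hm : 0 < mE P) {x : Fin n} :
    x ∈ OutF P ↔ ∃ k ≤ mE P - 1, x = eN P hm k := by
  constructor
  · intro hx
    have h2 : (x : Fin n) ∈ Set.range ((OutF P).orderEmbOfFin (k := mE P) rfl) := by
      rw [show Set.range ((OutF P).orderEmbOfFin (k := mE P) rfl) = ↑(OutF P) from
        Finset.range_orderEmbOfFin _ _]
      exact hx
    obtain ⟨i, hi⟩ := h2
    refine ⟨(i : ℕ), by omega, ?_⟩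
    rw [eN, ← hi]
    apply congrArg
    apply Fin.ext
    simp only [Fin.val_mk]
    omega
  · rintro ⟨k, hk, rfl⟩
    exact eN_mem hm k

lemma eN_zero_val (hP : IsD2 P) (hn : 0 < n) (hm : 0 < mE P) :
    ((eN P hm 0 : Fin n) : ℕ) = 0 := by
  have h0 : (⟨0, hn⟩ : Fin n) ∈ OutF P := mem_OutF.2 (zero_out hP hn)
  obtain ⟨k, hk, he⟩ := (mem_OutF_iff_eN hm).1 h0
  have hv : ((eN P hm k : Fin n) : ℕ) = 0 := by rw [← he]
  rcases Nat.eq_zero_or_pos k with rfl | hpos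
  · exact hv
  · have h2 := (eN_lt_iff hm (by omega) hk).2 hpos
    rw [Fin.lt_def, hv] at h2
    omega

lemma eN_last_val (hP : IsD2 P) (hn : 0 < n) (hm : 0 < mE P) :
    ((eN P hm (mE P - 1) : Fin n) : ℕ) = n - 1 := by
  have h0 : (⟨n - 1, by omega⟩ : Fin n) ∈ OutF P := mem_OutF.2 (last_out hP hn)
  obtain ⟨k, hk, he⟩ := (mem_OutF_iff_eN hm).1 h0
  have hv : ((eN P hm k : Fin n) : ℕ) = n - 1 := by rw [← he]
  rcases Nat.eq_or_lt_of_le hk with h2 | h2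
  · rw [← h2]; exact hv
  · exfalso
    have h3 := (eN_lt_iff hm hk (le_refl _)).2 h2
    rw [Fin.lt_def, hv] at h3
    have := (eN P hm (mE P - 1)).isLt
    omega

lemma gap_not_out (hm : 0 < mE P) {k : ℕ} (hk : k < mE P - 1) {z : Fin n}
    (h1 : eN P hm k < z) (h2 : z < eN P hm (k + 1)) : ¬ OutP P z := by
  intro hz
  obtain ⟨l, hl, rfl⟩ := (mem_OutF_iff_eN hm).1 (mem_OutF.2 hz)
  have e1 := (eN_lt_iff hm (by omega) hl).1 h1
  have e2 := (eN_lt_iff hm hl (by omega)).1 h2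
  omega

end Extract

section Extract2

variable {n : ℕ} {P η : Finpartition (univ : Finset (Fin n))}

/-- gap sizes extracted from a partition -/
noncomputable def Jx (P : Finpartition (univ : Finset (Fin n))) (hm : 0 < mE P) : ℕ → ℕ :=
  fun k => if k < mE P - 1 then
    ((eN P hm (k+1) : Fin n) : ℕ) - ((eN P hm k : Fin n) : ℕ) - 1 else 0

/-- η-cut positions extracted from a pair -/
noncomputable def Dx (P η : Finpartition (univ : Finset (Fin n))) (hm : 0 < mE P) :
    Finset ℕ :=
  (range (mE P - 1)).filter (fun k => ¬ (η.part (eN P hm k) = η.part (eN P hm (k+1))))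

/-- P-cut positions extracted from a pair -/
noncomputable def Ex (P η : Finpartition (univ : Finset (Fin n))) (hm : 0 < mE P) :
    Finset ℕ :=
  (Dx P η hm).filter (fun k => Jx P hm k = 0)

lemma hJx (hm : 0 < mE P) : ∀ i, mE P - 1 ≤ i → Jx P hm i = 0 := by
  intro i hi; rw [Jx, if_neg (by omega)]

lemma hDx (hm : 0 < mE P) : ∀ d ∈ Dx P η hm, d < mE P - 1 := by
  intro d hd
  rw [Dx, mem_filter, mem_range] at hd
  exact hd.1

lemma hEx (hm : 0 < mE P) : ∀ d ∈ Ex P η hm, d < mE P - 1 := by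
  intro d hd
  rw [Ex, mem_filter] at hd
  exact hDx hm d hd.1

lemma hExJ (hm : 0 < mE P) : ∀ d ∈ Ex P η hm, Jx P hm d = 0 := by
  intro d hd
  rw [Ex, mem_filter] at hd
  exact hd.2

lemma eN_val_lt (hm : 0 < mE P) {k : ℕ} (hk : k < mE P - 1) :
    ((eN P hm k : Fin n) : ℕ) < ((eN P hm (k+1) : Fin n) : ℕ) := by
  have := (eN_lt_iff hm (by omega) (by omega)).2 (Nat.lt_succ_self k)
  rwa [Fin.lt_def] at this

lemma Sf_eN (hP : IsD2 P) (hn : 0 < n) (hm : 0 < mE P) :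
    ∀ k, k ≤ mE P - 1 → Sf (Jx P hm) k = ((eN P hm k : Fin n) : ℕ) := by
  intro k
  induction k with
  | zero => intro _; rw [Sf_zero, eN_zero_val hP hn hm]
  | succ k ih =>
    intro hk
    have h1 := ih (by omega)
    have h2 := eN_val_lt hm (show k < mE P - 1 by omega)
    rw [Sf_succ, h1, Jx, if_pos (show k < mE P - 1 by omega)]
    omega

lemma htot_x (hP : IsD2 P) (hn : 0 < n) (hm : 0 < mE P) :
    (mE P - 1) + 1 + ∑ i ∈ range (mE P - 1), Jx P hm i = n := by
  have h1 := Sf_eN hP hn hm (mE P - 1) le_rfl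
  rw [eN_last_val hP hn hm] at h1
  rw [Sf] at h1
  omega

lemma GoodE (hP : IsD2 P) (hn : 0 < n) (hm : 0 < mE P) :
    Good n (mE P - 1) (Jx P hm) (Ex P η hm) :=
  ⟨hEx hm, hJx hm, htot_x hP hn hm⟩

lemma GoodD (hP : IsD2 P) (hn : 0 < n) (hm : 0 < mE P) :
    Good n (mE P - 1) (Jx P hm) (Dx P η hm) :=
  ⟨hDx hm, hJx hm, htot_x hP hn hm⟩

lemma isOut_iff (hP : IsD2 P) (hn : 0 < n) (hm : 0 < mE P) {x : Fin n} :
    isOut (mE P - 1) (Jx P hm) x ↔ OutP P x := by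
  constructor
  · intro h
    have h1 : Sf (Jx P hm) (kOf (mE P - 1) (Jx P hm) (x : ℕ)) = (x : ℕ) := h
    have h2 := kOf_le (m' := mE P - 1) (J := Jx P hm) (x : ℕ)
    rw [Sf_eN hP hn hm _ h2] at h1
    have : x = eN P hm (kOf (mE P - 1) (Jx P hm) (x : ℕ)) := Fin.ext h1.symm
    rw [this]
    exact eN_out hm _
  · intro h
    obtain ⟨k, hk, rfl⟩ := (mem_OutF_iff_eN hm).1 (mem_OutF.2 h)
    exact (isOut_of_coe hk (Sf_eN hP hn hm k hk).symm).1

lemma adj_of_Jx_zero (hP : IsD2 P) (hn : 0 < n) (hm : 0 < mE P) {k : ℕ}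
    (hk : k < mE P - 1) (h0 : Jx P hm k = 0) :
    ((eN P hm k : Fin n) : ℕ) + 1 = ((eN P hm (k+1) : Fin n) : ℕ) := by
  have h2 := eN_val_lt hm hk
  rw [Jx, if_pos hk] at h0
  omega

lemma cntD_consec (hm : 0 < mE P) {k : ℕ} (hk : k < mE P - 1) :
    (k ∉ Dx P η hm) ↔ η.part (eN P hm k) = η.part (eN P hm (k+1)) := by
  rw [Dx, mem_filter, mem_range, not_and, not_not]
  constructor
  · intro h; exact h hk
  · intro h _; exact h

lemma cntE_consec (hP : IsD2 P) (hPη : IsDecompPair P η) (hn : 0 < n) (hm : 0 < mE P)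
    {k : ℕ} (hk : k < mE P - 1) :
    (k ∉ Ex P η hm) ↔ P.part (eN P hm k) = P.part (eN P hm (k+1)) := by
  by_cases hJ : Jx P hm k = 0
  · -- adjacent outer elements
    have hadj := adj_of_Jx_zero hP hn hm hk hJ
    rw [adj_out_iff hP hPη (eN_out hm k) hadj]
    constructor
    · intro h
      exact (cntD_consec hm hk).1 (fun hD => h (by rw [Ex, mem_filter]; exact ⟨hD, hJ⟩))
    · intro h hEx
      rw [Ex, mem_filter] at hEx
      exact ((cntD_consec hm hk).2 h) hEx.1
  · -- nonempty gap
    have hgap : ((eN P hm k : Fin n) : ℕ) + 1 < ((eN P hm (k+1) : Fin n) : ℕ) := by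
      have h2 := eN_val_lt hm hk
      rw [Jx, if_pos hk] at hJ
      omega
    constructor
    · intro _
      refine consec_out_same_of_gap hP (eN_out hm k) (eN_out hm (k+1)) ?_ hgap
      intro z h1 h2
      exact gap_not_out hm hk (Fin.lt_def.2 h1) (Fin.lt_def.2 h2)
    · intro _
      rw [Ex, mem_filter]
      intro hcon
      exact hJ hcon.2

lemma cntE_iff (hP : IsD2 P) (hPη : IsDecompPair P η) (hn : 0 < n) (hm : 0 < mE P)
    {k l : ℕ} (hkl : k ≤ l) (hl : l ≤ mE P - 1) :
    cnt (Ex P η hm) l = cnt (Ex P η hm) k ↔ P.part (eN P hm k) = P.part (eN P hm l) := by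
  induction l, hkl using Nat.le_induction with
  | base => simp
  | succ l hkl ih =>
    have ihh := ih (by omega)
    constructor
    · intro h
      have h1 : cnt (Ex P η hm) l = cnt (Ex P η hm) k :=
        cnt_sandwich hkl (by omega) h.symm
      have h2 : l ∉ Ex P η hm := by
        rw [← cnt_succ_eq_iff (E := Ex P η hm) (k := l)]
        omega
      rw [ihh.1 h1]
      exact (cntE_consec hP hPη hn hm (by omega)).1 h2
    · intro h
      have hpl : P.part (eN P hm l) = P.part (eN P hm k) := by
        rcases Nat.eq_or_lt_of_le hkl with he | hlt
        · rw [he]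
        · refine part_interval hP (eN_out hm l) ?_ ?_ h
          · exact (eN_lt_iff hm (by omega) (by omega)).2 hlt
          · exact (eN_lt_iff hm (by omega) (by omega)).2 (by omega)
      have h2 : l ∉ Ex P η hm :=
        (cntE_consec hP hPη hn hm (by omega)).2 (by rw [hpl, h])
      have h3 : cnt (Ex P η hm) l = cnt (Ex P η hm) k := ihh.2 hpl.symm
      rw [cnt_succ_eq_iff.2 h2]
      exact h3

lemma cntD_iff (hP : IsD2 P) (hPη : IsDecompPair P η) (hn : 0 < n) (hm : 0 < mE P)
    {k l : ℕ} (hkl : k ≤ l) (hl : l ≤ mE P - 1) :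
    cnt (Dx P η hm) l = cnt (Dx P η hm) k ↔ η.part (eN P hm k) = η.part (eN P hm l) := by
  induction l, hkl using Nat.le_induction with
  | base => simp
  | succ l hkl ih =>
    have ihh := ih (by omega)
    constructor
    · intro h
      have h1 : cnt (Dx P η hm) l = cnt (Dx P η hm) k :=
        cnt_sandwich hkl (by omega) h.symm
      have h2 : l ∉ Dx P η hm := by
        rw [← cnt_succ_eq_iff (E := Dx P η hm) (k := l)]
        omega
      rw [ihh.1 h1]
      exact (cntD_consec hm (by omega)).1 h2
    · intro h
      have hpl : η.part (eN P hm l) = η.part (eN P hm k) := by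
        rcases Nat.eq_or_lt_of_le hkl with he | hlt
        · rw [he]
        · refine eta_interval hP hPη (eN_out hm k) (eN_out hm l) (eN_out hm (l+1)) ?_ ?_ h
          · exact (eN_lt_iff hm (by omega) (by omega)).2 hlt
          · exact (eN_lt_iff hm (by omega) (by omega)).2 (by omega)
      have h2 : l ∉ Dx P η hm :=
        (cntD_consec hm (by omega)).2 (by rw [hpl, h])
      have h3 : cnt (Dx P η hm) l = cnt (Dx P η hm) k := ihh.2 hpl.symm
      rw [cnt_succ_eq_iff.2 h2]
      exact h3

end Extract2

section Extract3

variable {n : ℕ} {P η : Finpartition (univ : Finset (Fin n))}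

lemma P_reconstruct (hP : IsD2 P) (hPη : IsDecompPair P η) (hn : 0 < n) (hm : 0 < mE P) :
    FP (lab n (mE P - 1) (Jx P hm) (Ex P η hm)) = P := by
  have GE := GoodE (η := η) hP hn hm
  apply eq_of_parts_subset
  intro p hp
  obtain ⟨a, rfl⟩ := mem_parts_FP.1 hp
  by_cases ha : isOut (mE P - 1) (Jx P hm) a
  · -- outer block
    have haO : OutP P a := (isOut_iff hP hn hm).1 ha
    have hkale : kOf (mE P - 1) (Jx P hm) (a : ℕ) ≤ mE P - 1 := kOf_le _
    have haeq : a = eN P hm (kOf (mE P - 1) (Jx P hm) (a : ℕ)) := by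
      have ha' : Sf (Jx P hm) (kOf (mE P - 1) (Jx P hm) (a : ℕ)) = (a : ℕ) := ha
      rw [Sf_eN hP hn hm _ hkale] at ha'
      exact Fin.ext ha'.symm
    have hfib : fib (lab n (mE P - 1) (Jx P hm) (Ex P η hm))
        (lab n (mE P - 1) (Jx P hm) (Ex P η hm) a) = P.part a := by
      ext x
      rw [mem_fib_out GE.hE ha]
      constructor
      · rintro ⟨k, hk, hxk, hc⟩
        have hxeq : x = eN P hm k := Fin.ext (by rw [hxk, Sf_eN hP hn hm k hk])
        have hpp : P.part (eN P hm k) =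
            P.part (eN P hm (kOf (mE P - 1) (Jx P hm) (a : ℕ))) := by
          rcases le_total k (kOf (mE P - 1) (Jx P hm) (a : ℕ)) with h | h
          · exact (cntE_iff hP hPη hn hm h hkale).1 hc.symm
          · exact ((cntE_iff hP hPη hn hm h hk).1 hc).symm
        have : P.part (eN P hm k) = P.part a := by rw [hpp, ← haeq]
        rw [hxeq, ← this]
        exact P.mem_part (mem_univ _)
      · intro hx
        have hxO : OutP P x := out_mem_part haO hx
        obtain ⟨l, hl, hxeq⟩ := (mem_OutF_iff_eN hm).1 (mem_OutF.2 hxO)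
        have hparts : P.part (eN P hm l) =
            P.part (eN P hm (kOf (mE P - 1) (Jx P hm) (a : ℕ))) := by
          rw [← hxeq, ← haeq]
          exact P.part_eq_of_mem (P.part_mem.2 (mem_univ a)) hx
        have hcnt : cnt (Ex P η hm) l =
            cnt (Ex P η hm) (kOf (mE P - 1) (Jx P hm) (a : ℕ)) := by
          rcases le_total l (kOf (mE P - 1) (Jx P hm) (a : ℕ)) with h | h
          · exact ((cntE_iff hP hPη hn hm h hkale).2 hparts).symm
          · exact (cntE_iff hP hPη hn hm h hl).2 hparts.symm
        exact ⟨l, hl, by rw [hxeq, Sf_eN hP hn hm l hl], hcnt⟩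
    rw [hfib]
    exact P.part_mem.2 (mem_univ a)
  · -- inner block
    have hka := inner_ka GE.hJ GE.htot ha
    have hu := Sf_eN hP hn hm _ (le_of_lt hka.1)
    have hv := Sf_eN hP hn hm (kOf (mE P - 1) (Jx P hm) (a : ℕ) + 1) hka.1
    have hs := Sf_succ (J := Jx P hm) (kOf (mE P - 1) (Jx P hm) (a : ℕ))
    have hbet : ∀ z : Fin n,
        ((eN P hm (kOf (mE P - 1) (Jx P hm) (a : ℕ)) : Fin n) : ℕ) < (z : ℕ) →
        (z : ℕ) < ((eN P hm (kOf (mE P - 1) (Jx P hm) (a : ℕ) + 1) : Fin n) : ℕ) →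
        ¬ OutP P z := by
      intro z h1 h2
      exact gap_not_out hm hka.1 (Fin.lt_def.2 h1) (Fin.lt_def.2 h2)
    have hgap : ((eN P hm (kOf (mE P - 1) (Jx P hm) (a : ℕ)) : Fin n) : ℕ) + 1 <
        ((eN P hm (kOf (mE P - 1) (Jx P hm) (a : ℕ) + 1) : Fin n) : ℕ) := by
      omega
    have key := gap_part_eq hP (eN_out hm _) (eN_out hm _) hbet hgap
    have hfib : fib (lab n (mE P - 1) (Jx P hm) (Ex P η hm))
        (lab n (mE P - 1) (Jx P hm) (Ex P η hm) a) =
        P.part (⟨((eN P hm (kOf (mE P - 1) (Jx P hm) (a : ℕ)) : Fin n) : ℕ) + 1,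
          by have := (eN P hm (kOf (mE P - 1) (Jx P hm) (a : ℕ) + 1)).isLt; omega⟩ : Fin n) := by
      rw [key]
      ext x
      rw [mem_fib_in GE.hE GE.htot ha]
      simp only [mem_filter, mem_univ, true_and]
      omega
    rw [hfib]
    exact P.part_mem.2 (mem_univ _)

lemma eta_reconstruct (hP : IsD2 P) (hPη : IsDecompPair P η) (hn : 0 < n) (hm : 0 < mE P) :
    FP (lab n (mE P - 1) (Jx P hm) (Dx P η hm)) = η := by
  have GE := GoodE (η := η) hP hn hm
  have GD := GoodD (η := η) hP hn hm
  apply eq_of_parts_subset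
  intro p hp
  obtain ⟨a, rfl⟩ := mem_parts_FP.1 hp
  by_cases ha : isOut (mE P - 1) (Jx P hm) a
  · -- outer η block
    have haO : OutP P a := (isOut_iff hP hn hm).1 ha
    have hkale : kOf (mE P - 1) (Jx P hm) (a : ℕ) ≤ mE P - 1 := kOf_le _
    have haeq : a = eN P hm (kOf (mE P - 1) (Jx P hm) (a : ℕ)) := by
      have ha' : Sf (Jx P hm) (kOf (mE P - 1) (Jx P hm) (a : ℕ)) = (a : ℕ) := ha
      rw [Sf_eN hP hn hm _ hkale] at ha'
      exact Fin.ext ha'.symm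
    have hfib : fib (lab n (mE P - 1) (Jx P hm) (Dx P η hm))
        (lab n (mE P - 1) (Jx P hm) (Dx P η hm) a) = η.part a := by
      ext x
      rw [mem_fib_out GD.hE ha]
      constructor
      · rintro ⟨k, hk, hxk, hc⟩
        have hxeq : x = eN P hm k := Fin.ext (by rw [hxk, Sf_eN hP hn hm k hk])
        have hpp : η.part (eN P hm k) =
            η.part (eN P hm (kOf (mE P - 1) (Jx P hm) (a : ℕ))) := by
          rcases le_total k (kOf (mE P - 1) (Jx P hm) (a : ℕ)) with h | h
          · exact (cntD_iff hP hPη hn hm h hkale).1 hc.symm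
          · exact ((cntD_iff hP hPη hn hm h hk).1 hc).symm
        have : η.part (eN P hm k) = η.part a := by rw [hpp, ← haeq]
        rw [hxeq, ← this]
        exact η.mem_part (mem_univ _)
      · intro hx
        have hxO : OutP P x := out_mem_eta hP hPη haO hx
        obtain ⟨l, hl, hxeq⟩ := (mem_OutF_iff_eN hm).1 (mem_OutF.2 hxO)
        have hparts : η.part (eN P hm l) =
            η.part (eN P hm (kOf (mE P - 1) (Jx P hm) (a : ℕ))) := by
          rw [← hxeq, ← haeq]
          exact η.part_eq_of_mem (η.part_mem.2 (mem_univ a)) hx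
        have hcnt : cnt (Dx P η hm) l =
            cnt (Dx P η hm) (kOf (mE P - 1) (Jx P hm) (a : ℕ)) := by
          rcases le_total l (kOf (mE P - 1) (Jx P hm) (a : ℕ)) with h | h
          · exact ((cntD_iff hP hPη hn hm h hkale).2 hparts).symm
          · exact (cntD_iff hP hPη hn hm h hl).2 hparts.symm
        exact ⟨l, hl, by rw [hxeq, Sf_eN hP hn hm l hl], hcnt⟩
    rw [hfib]
    exact η.part_mem.2 (mem_univ a)
  · -- inner η block: same as inner P block
    have hka := inner_ka GE.hJ GE.htot ha
    have hu := Sf_eN hP hn hm _ (le_of_lt hka.1)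
    have hv := Sf_eN hP hn hm (kOf (mE P - 1) (Jx P hm) (a : ℕ) + 1) hka.1
    have hs := Sf_succ (J := Jx P hm) (kOf (mE P - 1) (Jx P hm) (a : ℕ))
    have hbet : ∀ z : Fin n,
        ((eN P hm (kOf (mE P - 1) (Jx P hm) (a : ℕ)) : Fin n) : ℕ) < (z : ℕ) →
        (z : ℕ) < ((eN P hm (kOf (mE P - 1) (Jx P hm) (a : ℕ) + 1) : Fin n) : ℕ) →
        ¬ OutP P z := by
      intro z h1 h2
      exact gap_not_out hm hka.1 (Fin.lt_def.2 h1) (Fin.lt_def.2 h2)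
    have hgap : ((eN P hm (kOf (mE P - 1) (Jx P hm) (a : ℕ)) : Fin n) : ℕ) + 1 <
        ((eN P hm (kOf (mE P - 1) (Jx P hm) (a : ℕ) + 1) : Fin n) : ℕ) := by
      omega
    have key := gap_part_eq hP (eN_out hm _) (eN_out hm _) hbet hgap
    have hb2 : ((eN P hm (kOf (mE P - 1) (Jx P hm) (a : ℕ)) : Fin n) : ℕ) + 1 < n := by
      have := (eN P hm (kOf (mE P - 1) (Jx P hm) (a : ℕ) + 1)).isLt; omega
    set x0 : Fin n :=
      ⟨((eN P hm (kOf (mE P - 1) (Jx P hm) (a : ℕ)) : Fin n) : ℕ) + 1, hb2⟩ with hx0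
    have hx0in : ¬ OutP P x0 := by
      apply hbet
      · simp [hx0]
      · simp [hx0]; omega
    have hfib : fib (lab n (mE P - 1) (Jx P hm) (Dx P η hm))
        (lab n (mE P - 1) (Jx P hm) (Dx P η hm) a) = P.part x0 := by
      rw [key]
      ext x
      rw [mem_fib_in GD.hE GD.htot ha]
      simp only [mem_filter, mem_univ, true_and]
      omega
    rw [hfib]
    exact hPη.1 (P.part x0) (P.part_mem.2 (mem_univ x0)) (depth_two_of_not_out hP hx0in)

end Extract3

section Assemble

variable {n m' : ℕ} {J : ℕ → ℕ} {E D : Finset ℕ}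

lemma outP_FP_iff (hG : Good n m' J E) (hE0 : ∀ d ∈ E, J d = 0) {x : Fin n} :
    OutP (FP (lab n m' J E)) x ↔ isOut m' J x := by
  constructor
  · intro h
    by_contra hx
    have h2 := blockDepth_of_in hG hE0 hx
    have h3 : blockDepth (FP (lab n m' J E)) ((FP (lab n m' J E)).part x) = 1 := h
    omega
  · intro h
    exact blockDepth_of_out hG h

lemma OutF_FP (hG : Good n m' J E) (hE0 : ∀ d ∈ E, J d = 0)
    (himg : ∀ x ∈ (range (m' + 1)).image (Sf J), x < n) :
    OutF (FP (lab n m' J E)) = Finset.attachFin ((range (m' + 1)).image (Sf J)) himg := by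
  ext x
  rw [mem_OutF, Finset.mem_attachFin, outP_FP_iff hG hE0, mem_image]
  constructor
  · intro h
    exact ⟨kOf m' J (x : ℕ), mem_range.2 (by have := kOf_le (m' := m') (J := J) (x : ℕ); omega), h⟩
  · rintro ⟨k, hk, hxk⟩
    rw [mem_range] at hk
    exact (isOut_of_coe (by omega) hxk.symm).1

lemma himg_ok (hG : Good n m' J E) : ∀ x ∈ (range (m' + 1)).image (Sf J), x < n := by
  intro x hx
  rw [mem_image] at hx
  obtain ⟨k, hk, rfl⟩ := hx
  rw [mem_range] at hk
  exact hG.le_top (by omega)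

lemma mE_FP (hG : Good n m' J E) (hE0 : ∀ d ∈ E, J d = 0) :
    mE (FP (lab n m' J E)) = m' + 1 := by
  rw [mE, OutF_FP hG hE0 (himg_ok hG), Finset.card_attachFin,
    Finset.card_image_of_injective _ Sf_strictMono.injective, card_range]

lemma eN_FP (hG : Good n m' J E) (hE0 : ∀ d ∈ E, J d = 0)
    (hm : 0 < mE (FP (lab n m' J E))) {k : ℕ} (hk : k ≤ m') :
    ((eN (FP (lab n m' J E)) hm k : Fin n) : ℕ) = Sf J k := by
  have hmE := mE_FP hG hE0
  set f : Fin (mE (FP (lab n m' J E))) → Fin n :=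
    fun i => ⟨Sf J (i : ℕ), hG.le_top (by have := i.isLt; omega)⟩ with hf
  have hfs : ∀ i, f i ∈ OutF (FP (lab n m' J E)) := by
    intro i
    rw [mem_OutF, outP_FP_iff hG hE0]
    exact (isOut_of_coe (k := (i : ℕ)) (by have := i.isLt; omega) rfl).1
  have hmono : StrictMono f := by
    intro i j hij
    rw [hf, Fin.lt_def]
    simp only [Fin.val_mk]
    exact Sf_lt_iff.2 hij
  have huni := Finset.orderEmbOfFin_unique (f := f) (rfl) hfs hmono
  have h2 : eN (FP (lab n m' J E)) hm k = f ⟨min k (mE (FP (lab n m' J E)) - 1), by omega⟩ := by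
    rw [eN, huni]
    rfl
  rw [h2, hf]
  simp only [Fin.val_mk]
  congr 1
  omega

/-- raw gap function from data -/
def Jof (m' : ℕ) (j : Fin m' → ℕ) : ℕ → ℕ := fun i => if h : i < m' then j ⟨i, h⟩ else 0

/-- raw cut set from data -/
def Dof (m' : ℕ) (Df : Finset (Fin m')) : Finset ℕ := Df.image Fin.val

lemma hJof (m' : ℕ) (j : Fin m' → ℕ) : ∀ i, m' ≤ i → Jof m' j i = 0 := by
  intro i hi; rw [Jof]; exact dif_neg (by omega)

lemma hDof (m' : ℕ) (Df : Finset (Fin m')) : ∀ d ∈ Dof m' Df, d < m' := by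
  intro d hd
  rw [Dof, mem_image] at hd
  obtain ⟨k, -, rfl⟩ := hd
  exact k.isLt

lemma sum_Jof (m' : ℕ) (j : Fin m' → ℕ) :
    ∑ i ∈ range m', Jof m' j i = ∑ i, j i := by
  rw [← Fin.sum_univ_eq_sum_range]
  apply Finset.sum_congr rfl
  intro i _
  rw [Jof]
  exact dif_pos i.isLt

lemma mem_Dof {m' : ℕ} {Df : Finset (Fin m')} {k : Fin m'} :
    (k : ℕ) ∈ Dof m' Df ↔ k ∈ Df := by
  rw [Dof, mem_image]
  constructor
  · rintro ⟨l, hl, he⟩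
    rwa [← Fin.ext he]
  · intro h; exact ⟨k, h, rfl⟩

end Assemble

section Final

/-- The intermediate data type. -/
abbrev T (n : ℕ) : Type :=
  Σ mh : Fin n, Finset (Fin (mh : ℕ)) ×
    {j : Fin (mh : ℕ) → ℕ // (∑ i, j i) = n - ((mh : ℕ) + 1)}

/-- underlying pair of partitions built from the data -/
noncomputable def gpair (n : ℕ) (t : T n) :
    Finpartition (Finset.univ : Finset (Fin n)) ×
      Finpartition (Finset.univ : Finset (Fin n)) :=
  (FP (lab n (t.1 : ℕ) (Jof _ t.2.2.1)
      ((Dof _ t.2.1).filter (fun i => Jof _ t.2.2.1 i = 0))),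
   FP (lab n (t.1 : ℕ) (Jof _ t.2.2.1) (Dof _ t.2.1)))

/-- The map from data to decomposition pairs. -/
noncomputable def gmap (n : ℕ) (hn : 0 < n) (t : T n) :
    {Pe : Finpartition (Finset.univ : Finset (Fin n)) ×
          Finpartition (Finset.univ : Finset (Fin n)) //
        IsD2 Pe.1 ∧ IsDecompPair Pe.1 Pe.2} := by
  refine ⟨gpair n t, ?_, ?_⟩
  · refine isD2_FP hn ⟨?_, hJof _ _, ?_⟩ ?_
    · intro d hd
      exact hDof _ _ d ((filter_subset _ _) hd)
    · have h1 := sum_Jof (t.1 : ℕ) t.2.2.1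
      have h2 := t.2.2.2
      have h3 := t.1.isLt
      omega
    · intro d hd
      exact (mem_filter.1 hd).2
  · refine decompPair_FP (hDof _ _) (hJof _ _) ?_ rfl
    have h1 := sum_Jof (t.1 : ℕ) t.2.2.1
    have h2 := t.2.2.2
    have h3 := t.1.isLt
    omega

end Final

section Final2

lemma attachFin_inj {n : ℕ} {s s' : Finset ℕ} (h : ∀ m ∈ s, m < n)
    (h' : ∀ m ∈ s', m < n)
    (he : Finset.attachFin s h = Finset.attachFin s' h') : s = s' := by
  ext d
  constructor
  · intro hd
    have h2 : (⟨d, h d hd⟩ : Fin n) ∈ Finset.attachFin s h := (Finset.mem_attachFin _).2 hd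
    rw [he] at h2
    exact (Finset.mem_attachFin _).1 h2
  · intro hd
    have h2 : (⟨d, h' d hd⟩ : Fin n) ∈ Finset.attachFin s' h' := (Finset.mem_attachFin _).2 hd
    rw [← he] at h2
    exact (Finset.mem_attachFin _).1 h2

lemma part_eta_iff {n m' : ℕ} {J : ℕ → ℕ} {D : Finset ℕ} (GD : Good n m' J D)
    {l : ℕ} (hl : l < m') {x y : Fin n} (hx : (x : ℕ) = Sf J l)
    (hy : (y : ℕ) = Sf J (l + 1)) :
    ((FP (lab n m' J D)).part x = (FP (lab n m' J D)).part y ↔ l ∉ D) := by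
  have hox := isOut_of_coe (m' := m') (J := J) (k := l) (by omega) hx
  have hoy := isOut_of_coe (m' := m') (J := J) (k := l + 1) (by omega) hy
  rw [part_FP, part_FP, fib_eq_iff, lab_of_out hox.1, lab_of_out hoy.1, hox.2, hoy.2]
  rw [eq_comm]
  exact cnt_succ_eq_iff

lemma gmap_inj (n : ℕ) (hn : 0 < n) : Function.Injective (gmap n hn) := by
  rintro ⟨mh1, Df1, j1, hj1⟩ ⟨mh2, Df2, j2, hj2⟩ heq
  have hpair : gpair n ⟨mh1, Df1, ⟨j1, hj1⟩⟩ = gpair n ⟨mh2, Df2, ⟨j2, hj2⟩⟩ :=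
    congrArg Subtype.val heq
  rw [gpair, gpair, Prod.mk.injEq] at hpair
  dsimp only at hpair
  obtain ⟨hP, hη⟩ := hpair
  have htot1 : (mh1 : ℕ) + 1 + ∑ i ∈ range (mh1 : ℕ), Jof (mh1 : ℕ) j1 i = n := by
    have h1 := sum_Jof (mh1 : ℕ) j1
    have h3 := mh1.isLt
    omega
  have htot2 : (mh2 : ℕ) + 1 + ∑ i ∈ range (mh2 : ℕ), Jof (mh2 : ℕ) j2 i = n := by
    have h1 := sum_Jof (mh2 : ℕ) j2
    have h3 := mh2.isLt
    omega
  have GE1 : Good n (mh1 : ℕ) (Jof _ j1)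
      ((Dof _ Df1).filter (fun i => Jof (mh1 : ℕ) j1 i = 0)) :=
    ⟨fun d hd => hDof _ _ d ((filter_subset _ _) hd), hJof _ _, htot1⟩
  have GE2 : Good n (mh2 : ℕ) (Jof _ j2)
      ((Dof _ Df2).filter (fun i => Jof (mh2 : ℕ) j2 i = 0)) :=
    ⟨fun d hd => hDof _ _ d ((filter_subset _ _) hd), hJof _ _, htot2⟩
  have hE01 : ∀ d ∈ (Dof _ Df1).filter (fun i => Jof (mh1 : ℕ) j1 i = 0),
      Jof (mh1 : ℕ) j1 d = 0 := fun d hd => (mem_filter.1 hd).2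
  have hE02 : ∀ d ∈ (Dof _ Df2).filter (fun i => Jof (mh2 : ℕ) j2 i = 0),
      Jof (mh2 : ℕ) j2 d = 0 := fun d hd => (mem_filter.1 hd).2
  -- equal lengths
  have hm1 := mE_FP GE1 hE01
  have hm2 := mE_FP GE2 hE02
  rw [hP] at hm1
  have hmm : (mh1 : ℕ) = (mh2 : ℕ) := by omega
  have hfin : mh1 = mh2 := Fin.ext hmm
  subst hfin
  -- equal outer sets at the ℕ level
  have hOut : OutF (FP (lab n (mh1 : ℕ) (Jof _ j1)
        ((Dof _ Df1).filter (fun i => Jof (mh1 : ℕ) j1 i = 0)))) =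
      OutF (FP (lab n (mh1 : ℕ) (Jof _ j2)
        ((Dof _ Df2).filter (fun i => Jof (mh1 : ℕ) j2 i = 0)))) := by
    rw [hP]
  have himg : (range ((mh1 : ℕ) + 1)).image (Sf (Jof _ j1)) =
      (range ((mh1 : ℕ) + 1)).image (Sf (Jof _ j2)) := by
    apply attachFin_inj (himg_ok GE1) (himg_ok GE2)
    rw [← OutF_FP GE1 hE01 (himg_ok GE1), ← OutF_FP GE2 hE02 (himg_ok GE2)]
    exact hOut
  have hcard1 : ((range ((mh1 : ℕ) + 1)).image (Sf (Jof (mh1 : ℕ) j1))).card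
      = (mh1 : ℕ) + 1 := by
    rw [Finset.card_image_of_injective _ Sf_strictMono.injective, card_range]
  have hfs1 : ∀ i : Fin ((mh1 : ℕ) + 1), Sf (Jof (mh1 : ℕ) j1) (i : ℕ) ∈
      (range ((mh1 : ℕ) + 1)).image (Sf (Jof (mh1 : ℕ) j1)) := by
    intro i
    exact mem_image.2 ⟨(i : ℕ), mem_range.2 i.isLt, rfl⟩
  have hfs2 : ∀ i : Fin ((mh1 : ℕ) + 1), Sf (Jof (mh1 : ℕ) j2) (i : ℕ) ∈
      (range ((mh1 : ℕ) + 1)).image (Sf (Jof (mh1 : ℕ) j1)) := by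
    intro i
    rw [himg]
    exact mem_image.2 ⟨(i : ℕ), mem_range.2 i.isLt, rfl⟩
  have hF1 := Finset.orderEmbOfFin_unique hcard1
    (f := fun i : Fin ((mh1 : ℕ) + 1) => Sf (Jof (mh1 : ℕ) j1) (i : ℕ)) hfs1
    (fun i j hij => Sf_lt_iff.2 hij)
  have hF2 := Finset.orderEmbOfFin_unique hcard1
    (f := fun i : Fin ((mh1 : ℕ) + 1) => Sf (Jof (mh1 : ℕ) j2) (i : ℕ)) hfs2
    (fun i j hij => Sf_lt_iff.2 hij)
  have hSf : ∀ l, l ≤ (mh1 : ℕ) →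
      Sf (Jof (mh1 : ℕ) j1) l = Sf (Jof (mh1 : ℕ) j2) l := by
    intro l hl
    have := congrFun (hF1.trans hF2.symm) ⟨l, by omega⟩
    simpa using this
  -- the gap data agree
  have hJeq : j1 = j2 := by
    funext k
    have e1 := hSf (k : ℕ) (by omega)
    have e2 := hSf ((k : ℕ) + 1) (by omega)
    rw [Sf_succ, Sf_succ] at e2
    have r1 : Jof (mh1 : ℕ) j1 (k : ℕ) = j1 k := by
      rw [Jof, dif_pos k.isLt]
    have r2 : Jof (mh1 : ℕ) j2 (k : ℕ) = j2 k := by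
      rw [Jof, dif_pos k.isLt]
    omega
  subst hJeq
  -- the cut sets agree
  have GD1 : Good n (mh1 : ℕ) (Jof _ j1) (Dof _ Df1) := ⟨hDof _ _, hJof _ _, htot1⟩
  have GD2 : Good n (mh1 : ℕ) (Jof _ j1) (Dof _ Df2) := ⟨hDof _ _, hJof _ _, htot2⟩
  have hDeq : Df1 = Df2 := by
    ext k
    have hl : (k : ℕ) < (mh1 : ℕ) := k.isLt
    have hb1 : Sf (Jof (mh1 : ℕ) j1) (k : ℕ) < n := GD1.le_top (by omega)
    have hb2 : Sf (Jof (mh1 : ℕ) j1) ((k : ℕ) + 1) < n := GD1.le_top (by omega)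
    have h1 := part_eta_iff GD1 hl (x := ⟨_, hb1⟩) (y := ⟨_, hb2⟩) rfl rfl
    have h2 := part_eta_iff GD2 hl (x := ⟨_, hb1⟩) (y := ⟨_, hb2⟩) rfl rfl
    rw [hη] at h1
    rw [← mem_Dof (Df := Df1), ← mem_Dof (Df := Df2)]
    exact not_iff_not.1 (h1.symm.trans h2)
  subst hDeq
  rfl

lemma gmap_surj (n : ℕ) (hn : 0 < n) : Function.Surjective (gmap n hn) := by
  rintro ⟨⟨P, η⟩, hP, hPη⟩
  dsimp only at hP hPη
  have hm := mE_pos hP hn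
  have hmle := mE_le hP
  have hsum : ∑ i : Fin (mE P - 1), Jx P hm (i : ℕ) = n - ((mE P - 1) + 1) := by
    have h1 := htot_x hP hn hm
    have h2 : ∑ i ∈ range (mE P - 1), Jx P hm i
        = ∑ i : Fin (mE P - 1), Jx P hm (i : ℕ) :=
      (Fin.sum_univ_eq_sum_range _ _).symm
    omega
  refine ⟨⟨⟨mE P - 1, by omega⟩,
    univ.filter (fun k : Fin (mE P - 1) =>
      ¬ (η.part (eN P hm (k : ℕ)) = η.part (eN P hm ((k : ℕ) + 1)))),
    ⟨fun k => Jx P hm (k : ℕ), hsum⟩⟩, ?_⟩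
  apply Subtype.ext
  show gpair n _ = (P, η)
  have hJeq : Jof (mE P - 1) (fun k : Fin (mE P - 1) => Jx P hm (k : ℕ)) = Jx P hm := by
    funext i
    rw [Jof]
    split
    · rfl
    · exact (hJx hm i (by omega)).symm
  have hDeq : Dof (mE P - 1) (univ.filter (fun k : Fin (mE P - 1) =>
      ¬ (η.part (eN P hm (k : ℕ)) = η.part (eN P hm ((k : ℕ) + 1))))) = Dx P η hm := by
    ext d
    rw [Dof, mem_image, Dx, mem_filter, mem_range]
    constructor
    · rintro ⟨k, hk, rfl⟩
      rw [mem_filter] at hk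
      exact ⟨k.isLt, hk.2⟩
    · rintro ⟨hd, hcond⟩
      exact ⟨⟨d, hd⟩, mem_filter.2 ⟨mem_univ _, hcond⟩, rfl⟩
  rw [gpair]
  dsimp only
  rw [hJeq, hDeq]
  show (FP (lab n (mE P - 1) (Jx P hm) (Ex P η hm)),
    FP (lab n (mE P - 1) (Jx P hm) (Dx P η hm))) = (P, η)
  rw [P_reconstruct hP hPη hn hm, eta_reconstruct hP hPη hn hm]

end Final2

end DP

/-- Proposition 3.2: for every `n ≥ 1` there is a bijection between the family
`DP₂(n)` of decomposition pairs `(π, η)` with `π ∈ D₂(n)`, and the set `F(n)` of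
triples `(m, σ, j)` with `1 ≤ m ≤ n`, `σ` an interval partition of `{1,…,m}`
(modelled by a composition of `m`), and `j = (j₁,…,j_{m-1})` a tuple of
non-negative integers summing to `n - m` (here `m = m' + 1` with `m' : Fin n`). -/
theorem stmt4 (n : ℕ) (hn : 0 < n) :
    Nonempty
      ({Pe : Finpartition (Finset.univ : Finset (Fin n)) ×
             Finpartition (Finset.univ : Finset (Fin n)) //
          IsD2 Pe.1 ∧ IsDecompPair Pe.1 Pe.2} ≃
        Σ m' : Fin n, Composition ((m' : ℕ) + 1) ×
          {j : Fin (m' : ℕ) → ℕ // (∑ i, j i) = n - ((m' : ℕ) + 1)}) := by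
  refine ⟨?_⟩
  have hbij : Function.Bijective (DP.gmap n hn) := ⟨DP.gmap_inj n hn, DP.gmap_surj n hn⟩
  refine ((Equiv.ofBijective _ hbij).symm.trans ?_)
  refine Equiv.sigmaCongrRight (fun mh => ?_)
  refine Equiv.prodCongr (Fintype.equivOfCardEq ?_) (Equiv.refl _)
  rw [Fintype.card_finset, composition_card, Fintype.card_fin]
  norm_num
end
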